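/- arXiv:nlin/0003007 — 9 statements merged into one kernel-verified Lean document; each statement's English description precedes it below -/
import Mathlib

section
/- Let m ≥ 1, let f : [0,1] → [0,1] and π : [0,1] → ℝ^m be C^{m+1}, and let p ∈ [0,1] with P = π(p) satisfy: π^{-1}(P) = {p}, and the derivative vectors π^{(1)}(p), …, π^{(m)}(p) are linearly independent in ℝ^m. Let P_0, P_1, … be a trajectory of the reconstructed dynamics F (P_{i+1} = F(P_i)) whose closure contains P, with infinitely many points P_i ≠ P converging to P. Then the Eckmann–Ruelle linearization M = M(P) is the unique linear map L : ℝ^m → ℝ^m for which there exist constants C > 0 and δ > 0 such that ‖F(P + ΔP) − F(P) − L ΔP‖ ≤ C ‖ΔP‖^{m+1} for all ΔP with ‖ΔP‖ < δ and P + ΔP ∈ π([0,1]). -/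
set_option maxHeartbeats 1000000
open Set Filter Topology

open scoped Nat in
theorem my_taylor_bound {E : Type*} [NormedAddCommGroup E] [NormedSpace ℝ E]
    {f : ℝ → E} {a b p : ℝ} {n : ℕ} (hab : a < b) (hp : p ∈ Icc a b)
    (hf : ContDiffOn ℝ (n + 1) f (Icc a b)) :
    ∃ C, 0 ≤ C ∧ ∀ x ∈ Icc a b,
      ‖f x - taylorWithinEval f n (Icc a b) p x‖ ≤ C * |x - p| ^ (n + 1) := by
  have hunique := uniqueDiffOn_Icc hab
  obtain ⟨C0, hC0⟩ := isCompact_Icc.exists_bound_of_continuousOn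
    (hf.continuousOn_iteratedDerivWithin rfl.le hunique)
  have hf' : DifferentiableOn ℝ (iteratedDerivWithin n f (Icc a b)) (Icc a b) :=
    hf.differentiableOn_iteratedDerivWithin (by exact_mod_cast n.lt_succ_self) hunique
  refine ⟨(n ! : ℝ)⁻¹ * max C0 0, by positivity, fun x hx => ?_⟩
  have hsub : uIcc p x ⊆ Icc a b := uIcc_subset_Icc hp hx
  have A : ∀ t ∈ uIcc p x, HasDerivWithinAt (fun y => taylorWithinEval f n (Icc a b) y x)
      (((n ! : ℝ)⁻¹ * (x - t) ^ n) • iteratedDerivWithin (n + 1) f (Icc a b) t) (uIcc p x) t :=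
    fun t ht => (hasDerivWithinAt_taylorWithinEval_at_Icc x hab (hsub ht) hf.of_succ hf').mono hsub
  have bound : ∀ t ∈ uIcc p x,
      ‖((n ! : ℝ)⁻¹ * (x - t) ^ n) • iteratedDerivWithin (n + 1) f (Icc a b) t‖ ≤
      (n ! : ℝ)⁻¹ * |x - p| ^ n * max C0 0 := by
    intro t ht
    rw [norm_smul, Real.norm_eq_abs, abs_mul, abs_inv, Nat.abs_cast, abs_pow]
    have h1 : |x - t| ≤ |x - p| := by
      rcases le_total p x with h | h
      · rw [uIcc_of_le h] at ht
        rw [abs_of_nonneg (by linarith [ht.2] : (0:ℝ) ≤ x - t),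
          abs_of_nonneg (by linarith : (0:ℝ) ≤ x - p)]
        linarith [ht.1]
      · rw [uIcc_of_ge h] at ht
        rw [abs_of_nonpos (by linarith [ht.1] : x - t ≤ 0),
          abs_of_nonpos (by linarith : x - p ≤ 0)]
        linarith [ht.2]
    have h2 : ‖iteratedDerivWithin (n + 1) f (Icc a b) t‖ ≤ max C0 0 :=
      le_max_of_le_left (hC0 t (hsub ht))
    gcongr
  have := Convex.norm_image_sub_le_of_norm_hasDerivWithin_le A bound (convex_uIcc p x)
    left_mem_uIcc right_mem_uIcc
  simp only [taylorWithinEval_self] at this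
  refine this.trans_eq ?_
  rw [Real.norm_eq_abs, pow_succ]
  ring

theorem my_small_norm {m : ℕ} {ψ : ℝ → EuclideanSpace ℝ (Fin m)} {p : ℝ}
    {P : EuclideanSpace ℝ (Fin m)}
    (hψc : ContinuousOn ψ (Icc 0 1)) (hp : p ∈ Icc (0:ℝ) 1)
    (hinj : ∀ x ∈ Icc (0:ℝ) 1, ψ x = P → x = p) :
    ∀ ε > 0, ∃ δ > 0, ∀ x ∈ Icc (0:ℝ) 1, ‖ψ x - P‖ < δ → |x - p| < ε := by
  intro ε hε
  set K : Set ℝ := Icc 0 1 ∩ {x | ε ≤ |x - p|} with hKdef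
  have hKc : IsCompact K := isCompact_Icc.inter_right
    (isClosed_le continuous_const ((continuous_id.sub continuous_const).abs))
  have himg : IsCompact (ψ '' K) := hKc.image_of_continuousOn (hψc.mono inter_subset_left)
  have hPni : P ∉ ψ '' K := by
    rintro ⟨x, ⟨hx1, hx2⟩, hx3⟩
    have := hinj x hx1 hx3
    rw [this] at hx2
    simp at hx2
    linarith
  have hopen : IsOpen (ψ '' K)ᶜ := himg.isClosed.isOpen_compl
  obtain ⟨δ, hδ, hball⟩ := Metric.isOpen_iff.mp hopen P hPni
  refine ⟨δ, hδ, fun x hx hxδ => ?_⟩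
  by_contra hcon
  push_neg at hcon
  exact hball (by rw [Metric.mem_ball, dist_eq_norm]; exact hxδ) ⟨x, ⟨hx, hcon⟩, rfl⟩

/-- **Local Linearization, ℝ¹ → ℝᵐ** (Theorem 2.4 / JJ1).
Under assumptions (A1)–(A4), if `P = ψ p` lies in the closure of a trajectory of the
reconstructed dynamics `F = ψ ∘ f ∘ ψ⁻¹` with infinitely many trajectory points `≠ P`
converging to `P`, then the Eckmann–Ruelle linearization `M` (defined by
`M ψ⁽ⁿ⁾(p) = (ψ ∘ f)⁽ⁿ⁾(p)` for `n = 1, …, m`) is the unique linear map `L` such that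
`‖F(P + ΔP) − F(P) − L ΔP‖ = O(‖ΔP‖^{m+1})` as `ΔP → 0` with `P + ΔP ∈ ψ([0,1])`. -/
theorem statement0 (m : ℕ) (hm : 1 ≤ m)
    (f : ℝ → ℝ) (ψ : ℝ → EuclideanSpace ℝ (Fin m))
    (hfmaps : MapsTo f (Icc (0:ℝ) 1) (Icc (0:ℝ) 1))
    (hf : ContDiffOn ℝ (m + 1) f (Icc (0:ℝ) 1))
    (hψ : ContDiffOn ℝ (m + 1) ψ (Icc (0:ℝ) 1))
    (p : ℝ) (hp : p ∈ Icc (0:ℝ) 1)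
    (P : EuclideanSpace ℝ (Fin m)) (hP : P = ψ p)
    (hinj : ∀ x ∈ Icc (0:ℝ) 1, ψ x = P → x = p)
    (hindep : LinearIndependent ℝ
      (fun n : Fin m => iteratedDerivWithin ((n : ℕ) + 1) ψ (Icc (0:ℝ) 1) p))
    (traj : ℕ → ℝ) (htrajmem : ∀ i, traj i ∈ Icc (0:ℝ) 1)
    (htraj : ∀ i, traj (i + 1) = f (traj i))
    (φ : ℕ → ℕ) (hφ : StrictMono φ)
    (hne : ∀ k, ψ (traj (φ k)) ≠ P)
    (hlim : Tendsto (fun k => ψ (traj (φ k))) atTop (𝓝 P))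
    (M : EuclideanSpace ℝ (Fin m) →ₗ[ℝ] EuclideanSpace ℝ (Fin m))
    (hM : ∀ n : Fin m,
      M (iteratedDerivWithin ((n : ℕ) + 1) ψ (Icc (0:ℝ) 1) p)
        = iteratedDerivWithin ((n : ℕ) + 1) (ψ ∘ f) (Icc (0:ℝ) 1) p) :
    (∃ C > (0:ℝ), ∃ δ > (0:ℝ), ∀ x ∈ Icc (0:ℝ) 1, ‖ψ x - P‖ < δ →
        ‖ψ (f x) - ψ (f p) - M (ψ x - P)‖ ≤ C * ‖ψ x - P‖ ^ (m + 1)) ∧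
      ∀ L : EuclideanSpace ℝ (Fin m) →ₗ[ℝ] EuclideanSpace ℝ (Fin m),
        (∃ C > (0:ℝ), ∃ δ > (0:ℝ), ∀ x ∈ Icc (0:ℝ) 1, ‖ψ x - P‖ < δ →
          ‖ψ (f x) - ψ (f p) - L (ψ x - P)‖ ≤ C * ‖ψ x - P‖ ^ (m + 1)) → L = M := by
  have hg : ContDiffOn ℝ (m + 1) (ψ ∘ f) (Icc (0:ℝ) 1) := hψ.comp hf hfmaps
  obtain ⟨C₁, hC₁0, hC₁⟩ := my_taylor_bound (n := m) zero_lt_one hp hψ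
  obtain ⟨C₂, hC₂0, hC₂⟩ := my_taylor_bound (n := m) zero_lt_one hp hg
  -- Lipschitz-type upper bound (Taylor of order 0)
  have hψ1 : ContDiffOn ℝ ((0:ℕ) + 1) ψ (Icc (0:ℝ) 1) :=
    hψ.of_le (by exact_mod_cast Nat.succ_le_succ (Nat.zero_le m))
  obtain ⟨K, hK0, hK⟩ := my_taylor_bound (n := 0) zero_lt_one hp hψ1
  have hKlip : ∀ x ∈ Icc (0:ℝ) 1, ‖ψ x - P‖ ≤ K * |x - p| := by
    intro x hx
    have := hK x hx
    rw [taylor_within_zero_eval, pow_one] at this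
    rw [hP]
    exact this
  -- first derivative is nonzero
  have hD1 : iteratedDerivWithin 1 ψ (Icc (0:ℝ) 1) p ≠ 0 := by
    have := hindep.ne_zero ⟨0, hm⟩
    simpa using this
  set c : ℝ := ‖iteratedDerivWithin 1 ψ (Icc (0:ℝ) 1) p‖ with hcdef
  have hc0 : 0 < c := norm_pos_iff.mpr hD1
  have hψ2 : ContDiffOn ℝ ((1:ℕ) + 1) ψ (Icc (0:ℝ) 1) :=
    hψ.of_le (by exact_mod_cast Nat.succ_le_succ hm)
  obtain ⟨C₃, hC₃0, hC₃⟩ := my_taylor_bound (n := 1) zero_lt_one hp hψ2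
  -- lower bound : c/2 * |x - p| ≤ ‖ψ x - P‖ for |x - p| small
  have hlow : ∀ x ∈ Icc (0:ℝ) 1, |x - p| ≤ c / (2 * (C₃ + 1)) →
      c / 2 * |x - p| ≤ ‖ψ x - P‖ := by
    intro x hx hxc
    have hT1 : taylorWithinEval ψ 1 (Icc (0:ℝ) 1) p x
        = ψ p + (x - p) • iteratedDerivWithin 1 ψ (Icc (0:ℝ) 1) p := by
      rw [taylor_within_apply]
      simp [Finset.sum_range_succ]
    have h3 := hC₃ x hx
    rw [hT1] at h3
    set D1 := iteratedDerivWithin 1 ψ (Icc (0:ℝ) 1) p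
    set r := ψ x - (ψ p + (x - p) • D1) with hrdef
    have hsplit : ψ x - P = (x - p) • D1 + r := by rw [hP, hrdef]; abel
    have hnorm1 : ‖(x - p) • D1‖ ≤ ‖ψ x - P‖ + ‖r‖ := by
      have h' : (x - p) • D1 = ψ x - P + -r := by rw [hsplit]; abel
      rw [h']
      simpa using norm_add_le (ψ x - P) (-r)
    have hns : ‖(x - p) • D1‖ = |x - p| * c := by rw [norm_smul, Real.norm_eq_abs]
    have hr2 : ‖r‖ ≤ C₃ * |x - p| ^ 2 := by simpa using h3
    have ht0 : 0 ≤ |x - p| := abs_nonneg _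
    have hkey : C₃ * |x - p| ^ 2 ≤ c / 2 * |x - p| := by
      have h1 : (C₃ + 1) * |x - p| ≤ (C₃ + 1) * (c / (2 * (C₃ + 1))) :=
        mul_le_mul_of_nonneg_left hxc (by linarith)
      have h2 : (C₃ + 1) * (c / (2 * (C₃ + 1))) = c / 2 := by
        field_simp
      nlinarith [sq_nonneg (x - p), abs_nonneg (x - p)]
    nlinarith [hr2, hnorm1, hns]
  have hsmall := my_small_norm hψ.continuousOn hp hinj
  -- the key cancellation
  have key : ∀ x : ℝ, M (taylorWithinEval ψ m (Icc (0:ℝ) 1) p x - ψ p)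
      = taylorWithinEval (ψ ∘ f) m (Icc (0:ℝ) 1) p x - (ψ ∘ f) p := by
    intro x
    rw [taylor_within_apply, taylor_within_apply, Finset.sum_range_succ', Finset.sum_range_succ']
    simp only [pow_zero, Nat.factorial_zero, Nat.cast_one, inv_one, mul_one, one_mul,
      iteratedDerivWithin_zero, one_smul]
    rw [add_sub_cancel_right, add_sub_cancel_right, map_sum]
    refine Finset.sum_congr rfl fun k hk => ?_
    rw [map_smul]
    congr 1
    exact hM ⟨k, Finset.mem_range.mp hk⟩
  obtain ⟨CMb, hCMb0, hMb⟩ : ∃ CMb, 0 ≤ CMb ∧ ∀ v, ‖M v‖ ≤ CMb * ‖v‖ := by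
    refine ⟨‖LinearMap.toContinuousLinearMap M‖, norm_nonneg _, fun v => ?_⟩
    have h' : M v = LinearMap.toContinuousLinearMap M v := by
      rw [LinearMap.coe_toContinuousLinearMap' M]
    rw [h']
    exact (LinearMap.toContinuousLinearMap M).le_opNorm v
  obtain ⟨δ₁, hδ₁, hδ₁p⟩ := hsmall (c / (2 * (C₃ + 1))) (by positivity)
  have hex : (∃ C > (0:ℝ), ∃ δ > (0:ℝ), ∀ x ∈ Icc (0:ℝ) 1, ‖ψ x - P‖ < δ →
      ‖ψ (f x) - ψ (f p) - M (ψ x - P)‖ ≤ C * ‖ψ x - P‖ ^ (m + 1)) := by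
    refine ⟨(C₂ + CMb * C₁ + 1) * (2 / c) ^ (m + 1), by positivity, δ₁, hδ₁,
      fun x hx hxδ => ?_⟩
    have hxp : |x - p| < c / (2 * (C₃ + 1)) := hδ₁p x hx hxδ
    have hlow' := hlow x hx hxp.le
    have hup : |x - p| ≤ 2 / c * ‖ψ x - P‖ := by
      rw [div_mul_eq_mul_div, le_div_iff₀ hc0]
      nlinarith
    have herr : ψ (f x) - ψ (f p) - M (ψ x - P) =
        ((ψ ∘ f) x - taylorWithinEval (ψ ∘ f) m (Icc (0:ℝ) 1) p x)
        - M (ψ x - taylorWithinEval ψ m (Icc (0:ℝ) 1) p x) := by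
      have h1 : M (ψ x - P) = M (ψ x - taylorWithinEval ψ m (Icc (0:ℝ) 1) p x)
          + (taylorWithinEval (ψ ∘ f) m (Icc (0:ℝ) 1) p x - (ψ ∘ f) p) := by
        rw [← key x, ← map_add]
        congr 1
        rw [hP]; abel
      rw [h1]
      show (ψ ∘ f) x - (ψ ∘ f) p - _ = _
      abel
    rw [herr]
    have e1 := hC₂ x hx
    have e2 : ‖M (ψ x - taylorWithinEval ψ m (Icc (0:ℝ) 1) p x)‖
        ≤ CMb * (C₁ * |x - p| ^ (m + 1)) :=
      (hMb _).trans (by gcongr; exact hC₁ x hx)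
    calc ‖((ψ ∘ f) x - taylorWithinEval (ψ ∘ f) m (Icc (0:ℝ) 1) p x)
          - M (ψ x - taylorWithinEval ψ m (Icc (0:ℝ) 1) p x)‖
        ≤ ‖(ψ ∘ f) x - taylorWithinEval (ψ ∘ f) m (Icc (0:ℝ) 1) p x‖
          + ‖M (ψ x - taylorWithinEval ψ m (Icc (0:ℝ) 1) p x)‖ := norm_sub_le _ _
      _ ≤ C₂ * |x - p| ^ (m + 1) + CMb * (C₁ * |x - p| ^ (m + 1)) := add_le_add e1 e2
      _ ≤ (C₂ + CMb * C₁ + 1) * |x - p| ^ (m + 1) := by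
          nlinarith [pow_nonneg (abs_nonneg (x - p)) (m + 1)]
          
      _ ≤ (C₂ + CMb * C₁ + 1) * (2 / c * ‖ψ x - P‖) ^ (m + 1) := by
          gcongr
      _ = (C₂ + CMb * C₁ + 1) * (2 / c) ^ (m + 1) * ‖ψ x - P‖ ^ (m + 1) := by
          rw [mul_pow]; ring
  refine ⟨hex, fun L hL => ?_⟩
  obtain ⟨CM, hCM0, δM, hδM0, hMbound⟩ := hex
  obtain ⟨CL, hCL0, δL, hδL0, hLbound⟩ := hL
  obtain ⟨CDb, hCDb0, hDb⟩ : ∃ CDb, 0 ≤ CDb ∧ ∀ v, ‖(M - L) v‖ ≤ CDb * ‖v‖ := by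
    refine ⟨‖LinearMap.toContinuousLinearMap (M - L)‖, norm_nonneg _, fun v => ?_⟩
    have h' : (M - L) v = LinearMap.toContinuousLinearMap (M - L) v := by
      rw [LinearMap.coe_toContinuousLinearMap' (M - L)]
    rw [h']
    exact (LinearMap.toContinuousLinearMap (M - L)).le_opNorm v
  set v : ℕ → EuclideanSpace ℝ (Fin m) := fun j =>
    ((Nat.factorial (j + 1) : ℝ))⁻¹ •
      ((M - L) (iteratedDerivWithin (j + 1) ψ (Icc (0:ℝ) 1) p)) with hvdef
  have qkey : ∀ x : ℝ, (M - L) (taylorWithinEval ψ m (Icc (0:ℝ) 1) p x - ψ p)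
      = ∑ j ∈ Finset.range m, (x - p) ^ (j + 1) • v j := by
    intro x
    rw [taylor_within_apply, Finset.sum_range_succ']
    simp only [pow_zero, Nat.factorial_zero, Nat.cast_one, inv_one, mul_one, one_mul,
      iteratedDerivWithin_zero, one_smul]
    rw [add_sub_cancel_right, map_sum]
    refine Finset.sum_congr rfl fun k hk => ?_
    rw [map_smul, hvdef, mul_comm, mul_smul]
  set C₅ : ℝ := (CM + CL) * (max K 1) ^ (m + 1) + CDb * C₁ with hC₅def
  have hC₅0 : 0 ≤ C₅ := by positivity
  have hqbound : ∀ x ∈ Icc (0:ℝ) 1, ‖ψ x - P‖ < min δM δL →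
      ‖∑ j ∈ Finset.range m, (x - p) ^ (j + 1) • v j‖ ≤ C₅ * |x - p| ^ (m + 1) := by
    intro x hx hxδ
    rw [← qkey x]
    have hD : (M - L) (taylorWithinEval ψ m (Icc (0:ℝ) 1) p x - ψ p)
        = (M - L) (ψ x - P) - (M - L) (ψ x - taylorWithinEval ψ m (Icc (0:ℝ) 1) p x) := by
      rw [← map_sub]
      congr 1
      rw [hP]; abel
    rw [hD]
    have h1 : ‖(M - L) (ψ x - P)‖ ≤ (CM + CL) * ‖ψ x - P‖ ^ (m + 1) := by
      have h2 : (M - L) (ψ x - P) = (ψ (f x) - ψ (f p) - L (ψ x - P))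
          - (ψ (f x) - ψ (f p) - M (ψ x - P)) := by
        simp only [LinearMap.sub_apply]
        abel
      rw [h2]
      have hM' := hMbound x hx (hxδ.trans_le (min_le_left _ _))
      have hL' := hLbound x hx (hxδ.trans_le (min_le_right _ _))
      calc ‖(ψ (f x) - ψ (f p) - L (ψ x - P)) - (ψ (f x) - ψ (f p) - M (ψ x - P))‖
          ≤ ‖ψ (f x) - ψ (f p) - L (ψ x - P)‖ + ‖ψ (f x) - ψ (f p) - M (ψ x - P)‖ :=
            norm_sub_le _ _
        _ ≤ (CM + CL) * ‖ψ x - P‖ ^ (m + 1) := by linarith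
    have hψP : ‖ψ x - P‖ ^ (m + 1) ≤ (max K 1) ^ (m + 1) * |x - p| ^ (m + 1) := by
      rw [← mul_pow]
      refine pow_le_pow_left₀ (norm_nonneg _) ((hKlip x hx).trans ?_) _
      have : K ≤ max K 1 := le_max_left _ _
      have h0 := abs_nonneg (x - p)
      nlinarith
    have h3 : ‖(M - L) (ψ x - taylorWithinEval ψ m (Icc (0:ℝ) 1) p x)‖
        ≤ CDb * (C₁ * |x - p| ^ (m + 1)) := (hDb _).trans (by gcongr; exact hC₁ x hx)
    calc ‖(M - L) (ψ x - P) - (M - L) (ψ x - taylorWithinEval ψ m (Icc (0:ℝ) 1) p x)‖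
        ≤ ‖(M - L) (ψ x - P)‖
          + ‖(M - L) (ψ x - taylorWithinEval ψ m (Icc (0:ℝ) 1) p x)‖ := norm_sub_le _ _
      _ ≤ (CM + CL) * ((max K 1) ^ (m + 1) * |x - p| ^ (m + 1))
          + CDb * (C₁ * |x - p| ^ (m + 1)) := by
            refine add_le_add (h1.trans ?_) h3
            gcongr
      _ = C₅ * |x - p| ^ (m + 1) := by rw [hC₅def]; ring
  -- the trajectory converges to p
  have htendp : Tendsto (fun k => traj (φ k)) atTop (𝓝 p) := by
    rw [Metric.tendsto_atTop]
    intro ε hε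
    obtain ⟨δ, hδ0, hδ⟩ := hsmall ε hε
    obtain ⟨N, hN⟩ := Metric.tendsto_atTop.mp hlim δ hδ0
    refine ⟨N, fun k hk => ?_⟩
    rw [Real.dist_eq]
    exact hδ _ (htrajmem _) (by rw [← dist_eq_norm]; exact hN k hk)
  set B : ℝ := ∑ j ∈ Finset.range m, ‖v j‖ with hBdef
  have hB0 : 0 ≤ B := Finset.sum_nonneg fun _ _ => norm_nonneg _
  have hv : ∀ k, k < m → v k = 0 := by
    intro k
    induction k using Nat.strong_induction_on with
    | _ k ih =>
      intro hkm
      have hnorm_le : ∀ η > (0:ℝ), ‖v k‖ ≤ η * (C₅ + m * B) := by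
        intro η hη
        have hev1 : ∀ᶠ j in atTop, |traj (φ j) - p| < min η 1 := by
          obtain ⟨N, hN⟩ := Metric.tendsto_atTop.mp htendp (min η 1) (lt_min hη one_pos)
          exact eventually_atTop.mpr ⟨N, fun j hj => by rw [← Real.dist_eq]; exact hN j hj⟩
        have hev2 : ∀ᶠ j in atTop, ‖ψ (traj (φ j)) - P‖ < min δM δL := by
          obtain ⟨N, hN⟩ := Metric.tendsto_atTop.mp hlim (min δM δL) (lt_min hδM0 hδL0)
          exact eventually_atTop.mpr ⟨N, fun j hj => by rw [← dist_eq_norm]; exact hN j hj⟩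
        obtain ⟨j, hj1, hj2⟩ := (hev1.and hev2).exists
        set x := traj (φ j) with hxdef
        set h : ℝ := x - p with hhdef
        have hx : x ∈ Icc (0:ℝ) 1 := htrajmem _
        have hq := hqbound x hx hj2
        have hhne : h ≠ 0 := sub_ne_zero.mpr fun hxp => hne j (by rw [← hxdef, hxp, hP])
        have habs : 0 < |h| := abs_pos.mpr hhne
        have hsmall1 : |h| < 1 := lt_of_lt_of_le hj1 (min_le_right _ _)
        have hηb : |h| ≤ η := le_of_lt (lt_of_lt_of_le hj1 (min_le_left _ _))
        have hsum : ∑ i ∈ Finset.range m, h ^ (i + 1) • v i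
            = h ^ (k + 1) • ∑ i ∈ Finset.range (m - k), h ^ i • v (k + i) := by
          have hz : ∑ i ∈ Finset.Ico 0 k, h ^ (i + 1) • v i = 0 :=
            Finset.sum_eq_zero fun i hi => by
              rw [ih i (Finset.mem_Ico.mp hi).2 ((Finset.mem_Ico.mp hi).2.trans hkm), smul_zero]
          have hstep1 : ∑ i ∈ Finset.range m, h ^ (i + 1) • v i
              = ∑ i ∈ Finset.Ico k m, h ^ (i + 1) • v i := by
            rw [Finset.range_eq_Ico, ← Finset.sum_Ico_consecutive _ (Nat.zero_le k) hkm.le, hz,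
              zero_add]
          rw [hstep1, Finset.sum_Ico_eq_sum_range, Finset.smul_sum]
          refine Finset.sum_congr rfl fun i hi => ?_
          rw [smul_smul (h ^ (k + 1)) (h ^ i) (v (k + i)), ← pow_add,
            show k + 1 + i = k + i + 1 by omega]
        set S := ∑ i ∈ Finset.range (m - k), h ^ i • v (k + i) with hSdef
        have hS : ‖S‖ ≤ C₅ * |h| ^ (m - k) := by
          have h1 : |h| ^ (k + 1) * ‖S‖ ≤ C₅ * |h| ^ (m + 1) := by
            rw [← abs_pow, ← Real.norm_eq_abs, ← norm_smul, ← hsum]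
            exact hq
          have hpow : |h| ^ (m + 1) = |h| ^ (k + 1) * |h| ^ (m - k) := by
            rw [← pow_add]
            congr 1
            omega
          have hpos : (0:ℝ) < |h| ^ (k + 1) := pow_pos habs _
          calc ‖S‖ = (|h| ^ (k + 1))⁻¹ * (|h| ^ (k + 1) * ‖S‖) := by field_simp
            _ ≤ (|h| ^ (k + 1))⁻¹ * (C₅ * |h| ^ (m + 1)) := by gcongr
            _ = C₅ * |h| ^ (m - k) := by rw [hpow]; field_simp
        have hmk : m - k = (m - k - 1) + 1 := by omega
        have hpeel : S = (∑ i ∈ Finset.range (m - k - 1), h ^ (i + 1) • v (k + (i + 1))) + v k := by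
          rw [hSdef, hmk, Finset.sum_range_succ']
          simp
        have htail : ‖∑ i ∈ Finset.range (m - k - 1), h ^ (i + 1) • v (k + (i + 1))‖
            ≤ |h| * (m * B) := by
          calc ‖∑ i ∈ Finset.range (m - k - 1), h ^ (i + 1) • v (k + (i + 1))‖
              ≤ ∑ i ∈ Finset.range (m - k - 1), ‖h ^ (i + 1) • v (k + (i + 1))‖ :=
                norm_sum_le _ _
            _ ≤ ∑ _i ∈ Finset.range (m - k - 1), |h| * B := by
                refine Finset.sum_le_sum fun i hi => ?_
                rw [norm_smul, Real.norm_eq_abs, abs_pow]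
                have hp1 : |h| ^ (i + 1) ≤ |h| := by
                  calc |h| ^ (i + 1) ≤ |h| ^ 1 :=
                    pow_le_pow_of_le_one habs.le hsmall1.le (by omega)
                  _ = |h| := pow_one _
                have hp2 : ‖v (k + (i + 1))‖ ≤ B := by
                  refine Finset.single_le_sum (fun j _ => norm_nonneg (v j)) ?_
                  rw [Finset.mem_range]
                  have := Finset.mem_range.mp hi
                  omega
                exact mul_le_mul hp1 hp2 (norm_nonneg _) habs.le
            _ = (m - k - 1 : ℕ) * (|h| * B) := by
                rw [Finset.sum_const, Finset.card_range, nsmul_eq_mul]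
            _ ≤ |h| * (m * B) := by
                have hcast : ((m - k - 1 : ℕ) : ℝ) ≤ (m : ℝ) := by
                  exact_mod_cast Nat.sub_le _ _ |>.trans (Nat.sub_le _ _)
                have hhB : 0 ≤ |h| * B := mul_nonneg habs.le hB0
                nlinarith
        have hvk : ‖v k‖ ≤ C₅ * |h| ^ (m - k) + |h| * (m * B) := by
          have hvkeq : v k = S - ∑ i ∈ Finset.range (m - k - 1), h ^ (i + 1) • v (k + (i + 1)) := by
            rw [hpeel]; abel
          rw [hvkeq]
          exact (norm_sub_le _ _).trans (add_le_add hS htail)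
        have hmk1 : |h| ^ (m - k) ≤ |h| := by
          calc |h| ^ (m - k) ≤ |h| ^ 1 := pow_le_pow_of_le_one habs.le hsmall1.le (by omega)
            _ = |h| := pow_one _
        calc ‖v k‖ ≤ C₅ * |h| + |h| * (m * B) := by nlinarith
          _ = |h| * (C₅ + m * B) := by ring
          _ ≤ η * (C₅ + m * B) := by
              have hmB : (0:ℝ) ≤ (m:ℝ) * B := mul_nonneg (by positivity) hB0
              nlinarith
      by_contra hcon
      have hpos : 0 < ‖v k‖ := norm_pos_iff.mpr hcon
      have hmB : (0:ℝ) ≤ (m:ℝ) * B := mul_nonneg (by positivity) hB0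
      have hA1 : (0:ℝ) < C₅ + m * B + 1 := by linarith
      have hkey := hnorm_le (‖v k‖ / (2 * (C₅ + m * B + 1))) (div_pos hpos (by linarith))
      have hle : ‖v k‖ / (2 * (C₅ + m * B + 1)) * (C₅ + m * B) ≤ ‖v k‖ / 2 := by
        rw [div_mul_eq_mul_div, div_le_div_iff₀ (by linarith) two_pos]
        nlinarith
      linarith
  -- conclude L = M via the basis
  have hDzero : ∀ i : Fin m, (M - L) (iteratedDerivWithin ((i : ℕ) + 1) ψ (Icc (0:ℝ) 1) p) = 0 := by
    intro i
    have hvi := hv i i.isLt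
    rw [hvdef] at hvi
    simp only at hvi
    rcases smul_eq_zero.mp hvi with hbad | hgood
    · exact absurd hbad (by positivity)
    · exact hgood
  have hcard : Fintype.card (Fin m) = Module.finrank ℝ (EuclideanSpace ℝ (Fin m)) := by
    simp [finrank_euclideanSpace_fin]
  haveI : Nonempty (Fin m) := ⟨⟨0, hm⟩⟩
  have hfinal : M - L = 0 := by
    refine (basisOfLinearIndependentOfCardEqFinrank hindep hcard).ext fun i => ?_
    rw [coe_basisOfLinearIndependentOfCardEqFinrank]
    simpa using hDzero i
  exact (sub_eq_zero.mp hfinal).symm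
end

section
/- Let f : [0,1]² → [0,1]² and π : [0,1]² → ℝ^5 be C^3, and let P = π(p) be a point such that π^{-1}(P) = {p} and the five vectors π_x(p), π_y(p), π_{xx}(p), π_{xy}(p), π_{yy}(p) are linearly independent in ℝ^5. Let p_0, p_1, … ∈ [0,1]² be a trajectory of f and P_i = π(p_i). If the set {P_0, P_1, …} ⊆ ℝ^5 has d distinct approach directions at P, then the set {p_0, p_1, …} ⊆ ℝ² has d distinct approach directions at p. -/
open Set Filter Topology

/-- The unit square `[0,1]²` in the Euclidean plane. -/
def unitSq : Set (EuclideanSpace ℝ (Fin 2)) := {x | ∀ i, x i ∈ Set.Icc (0:ℝ) 1}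

/-- The standard basis direction `eₓ = (1,0)` of the plane. -/
noncomputable def ex : EuclideanSpace ℝ (Fin 2) := EuclideanSpace.single 0 1

/-- The standard basis direction `e_y = (0,1)` of the plane. -/
noncomputable def ey : EuclideanSpace ℝ (Fin 2) := EuclideanSpace.single 1 1

/-- A set `S` has the approach direction `l` (a unit vector) at the base point `P`. -/
def HasApproachDirection {E : Type*} [NormedAddCommGroup E] [NormedSpace ℝ E]
    (S : Set E) (P l : E) : Prop :=
  ‖l‖ = 1 ∧ ∃ Q : ℕ → E, (∀ k, Q k ∈ S) ∧ (∀ k, Q k ≠ P) ∧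
    Filter.Tendsto Q Filter.atTop (nhds P) ∧
    Filter.Tendsto (fun k => ‖Q k - P‖⁻¹ • (Q k - P)) Filter.atTop (nhds l)

/-- `S` has `d` distinct approach directions at `P`. -/
def HasDistinctApproachDirections {E : Type*} [NormedAddCommGroup E] [NormedSpace ℝ E]
    (S : Set E) (P : E) (d : ℕ) : Prop :=
  ∃ l : Fin d → E, (∀ i, HasApproachDirection S P (l i)) ∧
    ∀ i j, i ≠ j → l i ≠ l j ∧ l i ≠ -l j

/-!
Since `ψ_x(p)` and `ψ_y(p)` are independent, the derivative `A = dψ_p` is injective. Given points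
`ψ(q_k) → P` approaching along the direction `l`, the points `q_k` tend to `p`: `ψ` is continuous on
the compact square and `p` is the only preimage of `P`. Their directions `(q_k - p)/‖q_k - p‖`
subconverge on the compact unit circle to some `m`, and differentiability of `ψ` at `p` forces
`l = A m / ‖A m‖`. As `m ↦ A m / ‖A m‖` is odd, directions that are distinct up to sign upstairs
come from directions that are distinct up to sign downstairs.
-/

lemma unitSq_eq : unitSq = EuclideanSpace.equiv (Fin 2) ℝ ⁻¹' Icc 0 1 := by
  ext x; simp [unitSq, Pi.le_def, forall_and]

lemma isCompact_unitSq : IsCompact unitSq := by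
  rw [unitSq_eq]
  exact (EuclideanSpace.equiv (Fin 2) ℝ).toHomeomorph.isCompact_preimage.2 isCompact_Icc

lemma uniqueDiffOn_unitSq : UniqueDiffOn ℝ unitSq := by
  rw [unitSq_eq, ← ContinuousLinearEquiv.image_symm_eq_preimage, ← Set.pi_univ_Icc]
  exact (EuclideanSpace.equiv (Fin 2) ℝ).symm.uniqueDiffOn_image
    (UniqueDiffOn.univ_pi fun _ => uniqueDiffOn_Icc_zero_one)

lemma span_ex_ey : Submodule.span ℝ (Set.range ![ex, ey]) = ⊤ := by
  have : ![ex, ey] = ⇑(EuclideanSpace.basisFun (Fin 2) ℝ).toBasis := by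
    funext i; fin_cases i <;> simp [ex, ey]
  rw [this, Module.Basis.span_eq]

theorem IsCompact.tendsto_of_tendsto_comp {X Y α : Type*} [TopologicalSpace X]
    [TopologicalSpace Y] [T2Space Y] {s : Set X} (hs : IsCompact s) {ψ : X → Y}
    (hψ : ContinuousOn ψ s) {p : X} (hp : ∀ x ∈ s, ψ x = ψ p → x = p) {l : Filter α}
    {q : α → X} (hqs : ∀ᶠ k in l, q k ∈ s) (hψq : Tendsto (ψ ∘ q) l (𝓝 (ψ p))) :
    Tendsto q l (𝓝 p) := by
  refine hs.tendsto_nhds_of_unique_mapClusterPt hqs fun x hx hcl => hp x hx ?_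
  have : MapClusterPt (ψ x) l (ψ ∘ q) :=
    hcl.tendsto_comp' ((hψ x hx).mono_left (inf_le_inf_left _ (le_principal_iff.2 hqs)))
  exact eq_of_nhds_neBot (this.clusterPt.mono hψq)

lemma normalize_inv_norm_smul {E F : Type*} [NormedAddCommGroup E] [NormedAddCommGroup F]
    [NormedSpace ℝ F] (x : E) (y : F) (hy : x = 0 → y = 0) :
    NormedSpace.normalize (‖x‖⁻¹ • y) = NormedSpace.normalize y := by
  rcases eq_or_ne x 0 with rfl | hx
  · simp [hy rfl]
  · exact NormedSpace.normalize_smul_of_pos (by positivity) y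

section

variable {E F : Type*} [NormedAddCommGroup E] [NormedSpace ℝ E]
  [NormedAddCommGroup F] [NormedSpace ℝ F]

lemma continuousAt_normalize {x : E} (hx : x ≠ 0) : ContinuousAt NormedSpace.normalize x :=
  (continuous_norm.continuousAt.inv₀ (norm_ne_zero_iff.2 hx)).smul continuousAt_id

lemma HasFDerivWithinAt.tendsto_normalize_sub {ψ : E → F} {A : E →L[ℝ] F} {s : Set E} {p : E}
    (hψ : HasFDerivWithinAt ψ A s p) {α : Type*} {l : Filter α} {q : α → E}
    (hq : Tendsto q l (𝓝 p)) (hqs : ∀ᶠ k in l, q k ∈ s) {m : E}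
    (hm : Tendsto (fun k => NormedSpace.normalize (q k - p)) l (𝓝 m)) (hAm : A m ≠ 0) :
    Tendsto (fun k => NormedSpace.normalize (ψ (q k) - ψ p)) l
      (𝓝 (NormedSpace.normalize (A m))) := by
  have hlim := hψ.lim (c := fun k => ‖q k - p‖⁻¹) (tendsto_sub_nhds_zero_iff.2 hq)
    (by simpa using hqs) hm
  simp only [add_sub_cancel] at hlim
  refine ((continuousAt_normalize hAm).tendsto.comp hlim).congr fun k => ?_
  exact normalize_inv_norm_smul (q k - p) _ fun h => by rw [sub_eq_zero.1 h, sub_self]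

variable [ProperSpace E] {s S : Set E} {ψ : E → F} {A : E →L[ℝ] F} {p : E}

lemma HasApproachDirection.exists_of_image (hs : IsCompact s) (hSs : S ⊆ s)
    (hψ : ContinuousOn ψ s) (hp : ∀ x ∈ s, ψ x = ψ p → x = p)
    (hA : HasFDerivWithinAt ψ A s p) (hAinj : Function.Injective A) {l : F}
    (hl : HasApproachDirection (ψ '' S) (ψ p) l) :
    ∃ m, HasApproachDirection S p m ∧ l = NormedSpace.normalize (A m) := by
  obtain ⟨-, Q, hQS, hQp, hQ, hQl⟩ := hl
  choose q hqS hψq using hQS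
  have hqp : ∀ k, q k ≠ p := fun k h => hQp k (by rw [← hψq, h])
  have hqs : ∀ᶠ k in atTop, q k ∈ s := .of_forall fun k => hSs (hqS k)
  have hq : Tendsto q atTop (𝓝 p) :=
    hs.tendsto_of_tendsto_comp hψ hp hqs (by simpa [Function.comp_def, hψq] using hQ)
  have hsphere : ∀ k, NormedSpace.normalize (q k - p) ∈ Metric.sphere (0 : E) 1 := fun k => by
    simpa using NormedSpace.norm_normalize_eq_one_iff.2 (sub_ne_zero.2 (hqp k))
  obtain ⟨m, hm, φ, hφ, hqφ⟩ := (isCompact_sphere (0 : E) 1).tendsto_subseq hsphere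
  have hm1 : ‖m‖ = 1 := mem_sphere_zero_iff_norm.1 hm
  have hAm : A m ≠ 0 := (map_ne_zero_iff A hAinj).2 (norm_ne_zero_iff.1 (by simp [hm1]))
  refine ⟨m, ⟨hm1, q ∘ φ, fun k => hqS _, fun k => hqp _, hq.comp hφ.tendsto_atTop, hqφ⟩, ?_⟩
  refine tendsto_nhds_unique (hQl.comp hφ.tendsto_atTop) ?_
  have hψqφ := hA.tendsto_normalize_sub (hq.comp hφ.tendsto_atTop)
    (hφ.tendsto_atTop.eventually hqs) hqφ hAm
  simp only [Function.comp_def, hψq] at hψqφ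
  exact hψqφ

lemma HasDistinctApproachDirections.of_image (hs : IsCompact s) (hSs : S ⊆ s)
    (hψ : ContinuousOn ψ s) (hp : ∀ x ∈ s, ψ x = ψ p → x = p)
    (hA : HasFDerivWithinAt ψ A s p) (hAinj : Function.Injective A) {d : ℕ}
    (h : HasDistinctApproachDirections (ψ '' S) (ψ p) d) :
    HasDistinctApproachDirections S p d := by
  obtain ⟨l, hl, hdist⟩ := h
  choose m hm hlm using fun i => (hl i).exists_of_image hs hSs hψ hp hA hAinj
  refine ⟨m, hm, fun i j hij => ⟨fun h => (hdist i j hij).1 ?_, fun h => (hdist i j hij).2 ?_⟩⟩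
  · rw [hlm, hlm, h]
  · rw [hlm, hlm, h, map_neg, NormedSpace.normalize_neg]

end

theorem statement3_general
    (ψ : EuclideanSpace ℝ (Fin 2) → EuclideanSpace ℝ (Fin 5))
    (hψ : ContDiffOn ℝ 3 ψ unitSq)
    (p : EuclideanSpace ℝ (Fin 2)) (hp : p ∈ unitSq)
    (P : EuclideanSpace ℝ (Fin 5)) (hP : P = ψ p)
    (hinj : ∀ x ∈ unitSq, ψ x = P → x = p)
    (hindep : LinearIndependent ℝ
      ![iteratedFDerivWithin ℝ 1 ψ unitSq p ![ex],
        iteratedFDerivWithin ℝ 1 ψ unitSq p ![ey],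
        iteratedFDerivWithin ℝ 2 ψ unitSq p ![ex, ex],
        iteratedFDerivWithin ℝ 2 ψ unitSq p ![ex, ey],
        iteratedFDerivWithin ℝ 2 ψ unitSq p ![ey, ey]])
    (traj : ℕ → EuclideanSpace ℝ (Fin 2)) (htrajmem : ∀ i, traj i ∈ unitSq)
    (d : ℕ)
    (happr : HasDistinctApproachDirections (Set.range fun i => ψ (traj i)) P d) :
    HasDistinctApproachDirections (Set.range traj) p d := by
  subst hP
  have hA : HasFDerivWithinAt ψ (fderivWithin ℝ ψ unitSq p) unitSq p :=
    (hψ.differentiableOn (by norm_num) p hp).hasFDerivWithinAt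
  have hAinj : Function.Injective (fderivWithin ℝ ψ unitSq p) := by
    have hpair : LinearIndependent ℝ (fderivWithin ℝ ψ unitSq p ∘ ![ex, ey]) := by
      convert hindep.comp ![0, 1] (by decide) using 1
      funext i
      fin_cases i <;> simp [iteratedFDerivWithin_one_apply (uniqueDiffOn_unitSq p hp)]
    exact LinearMap.injective_of_linearIndependent span_ex_ey hpair
  rw [Set.range_comp' ψ traj] at happr
  exact happr.of_image isCompact_unitSq (range_subset_iff.2 htrajmem) hψ.continuousOn hinj hA hAinj

/-- **Lemma JJ2.** If the reconstructed trajectory `P_i = ψ(p_i)` has `d` distinct approach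
directions at `P = ψ(p)`, then the underlying trajectory `p_i` has `d` distinct approach
directions at `p`. -/
theorem statement3
    (f : EuclideanSpace ℝ (Fin 2) → EuclideanSpace ℝ (Fin 2))
    (ψ : EuclideanSpace ℝ (Fin 2) → EuclideanSpace ℝ (Fin 5))
    (hfmaps : MapsTo f unitSq unitSq)
    (hf : ContDiffOn ℝ 3 f unitSq)
    (hψ : ContDiffOn ℝ 3 ψ unitSq)
    (p : EuclideanSpace ℝ (Fin 2)) (hp : p ∈ unitSq)
    (P : EuclideanSpace ℝ (Fin 5)) (hP : P = ψ p)
    (hinj : ∀ x ∈ unitSq, ψ x = P → x = p)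
    (hindep : LinearIndependent ℝ
      ![iteratedFDerivWithin ℝ 1 ψ unitSq p ![ex],
        iteratedFDerivWithin ℝ 1 ψ unitSq p ![ey],
        iteratedFDerivWithin ℝ 2 ψ unitSq p ![ex, ex],
        iteratedFDerivWithin ℝ 2 ψ unitSq p ![ex, ey],
        iteratedFDerivWithin ℝ 2 ψ unitSq p ![ey, ey]])
    (traj : ℕ → EuclideanSpace ℝ (Fin 2)) (htrajmem : ∀ i, traj i ∈ unitSq)
    (htraj : ∀ i, traj (i + 1) = f (traj i))
    (d : ℕ)
    (happr : HasDistinctApproachDirections (Set.range fun i => ψ (traj i)) P d) :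
    HasDistinctApproachDirections (Set.range traj) p d :=
  statement3_general ψ hψ p hp P hP hinj hindep traj htrajmem d happr
end

section
/- Let m ≥ 1, let f : [0,1] → [0,1] and π : [0,1] → ℝ^m be C^{m+1}, let p ∈ [0,1], and set q = f(p), P = π(p), Q = π(q). Assume that both p and q satisfy: π^{-1}(π(·)) is the singleton {·}, and the derivative vectors π^{(1)}(·), …, π^{(m)}(·) are linearly independent in ℝ^m. Let α = (π^{(1)}(p), …, π^{(m)}(p)) and β = (π^{(1)}(q), …, π^{(m)}(q)) be the canonical embedding bases at P and Q. Then the matrix of the Eckmann–Ruelle linearization M(P) with respect to the bases α and β is upper triangular with diagonal entries (f'(p))^j for j = 1, …, m; equivalently, M(P) π^{(i)}(p) − (f'(p))^i π^{(i)}(q) lies in the span of π^{(1)}(q), …, π^{(i−1)}(q) for each i. -/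
/-!
By Faà di Bruno's formula, `(ψ ∘ f)⁽ⁿ⁾(p)` is a sum over ordered partitions `c` of `{1, …, n}` of
`(∏ f⁽|block|⁾(p)) • ψ⁽ᵏ⁾(f p)`, where `k ≥ 1` is the number of blocks of `c`. Only the partition
into singletons has `n` blocks, and it contributes `(f'(p))ⁿ ψ⁽ⁿ⁾(q)`; every other term lies in the
span of `ψ⁽¹⁾(q), …, ψ⁽ⁿ⁻¹⁾(q)`.
-/

open Set Filter Topology

namespace OrderedFinpartition

variable {n : ℕ} (c : OrderedFinpartition n)

lemma sum_partSize : ∑ i, c.partSize i = n := by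
  simpa using c.sum_sigma_eq_sum (fun _ ↦ (1 : ℕ))

lemma partSize_eq_one_of_length_eq (h : c.length = n) (i : Fin c.length) : c.partSize i = 1 := by
  by_contra hi
  have : ∑ _j : Fin c.length, 1 < ∑ j, c.partSize j :=
    Finset.sum_lt_sum (fun j _ ↦ c.partSize_pos j)
      ⟨i, Finset.mem_univ i, by have := c.partSize_pos i; omega⟩
  simp [c.sum_partSize, h] at this

lemma eq_atomic_of_length_eq (h : c.length = n) : c = atomic n := by
  have hsize := c.partSize_eq_one_of_length_eq h
  rcases c with ⟨length, partSize, _, emb, _, parts_strictMono, _, _⟩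
  dsimp only at h hsize
  subst h
  obtain rfl : partSize = fun _ ↦ 1 := funext hsize
  obtain rfl : emb = fun i _ ↦ i := by
    funext i j
    rw [Subsingleton.elim j 0]
    exact parts_strictMono.apply_eq
  rfl

lemma length_lt_of_ne_atomic (hc : c ≠ atomic n) : c.length < n :=
  c.length_le.lt_of_ne (mt c.eq_atomic_of_length_eq hc)

end OrderedFinpartition

section

variable {𝕜 E : Type*} [NontriviallyNormedField 𝕜] [NormedAddCommGroup E] [NormedSpace 𝕜 E]
  {g : 𝕜 → E} {f : 𝕜 → 𝕜} {s t : Set 𝕜} {x : 𝕜} {n : ℕ}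

theorem iteratedDerivWithin_scomp_sub_pow_smul_mem_span
    (hg : ContDiffWithinAt 𝕜 (n + 1) g t (f x)) (hf : ContDiffWithinAt 𝕜 (n + 1) f s x)
    (ht : UniqueDiffOn 𝕜 t) (hs : UniqueDiffOn 𝕜 s) (hx : x ∈ s) (hst : MapsTo f s t) :
    iteratedDerivWithin (n + 1) (g ∘ f) s x
        - derivWithin f s x ^ (n + 1) • iteratedDerivWithin (n + 1) g t (f x)
      ∈ Submodule.span 𝕜 (range fun j : Fin n ↦ iteratedDerivWithin (j + 1) g t (f x)) := by
  classical
  rw [iteratedDerivWithin_scomp_eq_sum_orderedFinpartition hg hf ht hs hx hst le_rfl,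
    ← Finset.add_sum_erase _ _ (Finset.mem_univ (OrderedFinpartition.atomic (n + 1)))]
  simp only [OrderedFinpartition.atomic_length, OrderedFinpartition.atomic_partSize,
    iteratedDerivWithin_one, Finset.prod_const, Finset.card_univ, Fintype.card_fin,
    add_sub_cancel_left]
  refine Submodule.sum_mem _ fun c hc ↦ Submodule.smul_mem _ _ (Submodule.subset_span ?_)
  have hlt := c.length_lt_of_ne_atomic (Finset.ne_of_mem_erase hc)
  have hpos := c.length_pos n.succ_pos
  exact ⟨⟨c.length - 1, by omega⟩, by simp only [Nat.sub_add_cancel hpos]⟩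

end

theorem statement5_general (m : ℕ)
    (f : ℝ → ℝ) (ψ : ℝ → EuclideanSpace ℝ (Fin m))
    (hfmaps : MapsTo f (Icc (0:ℝ) 1) (Icc (0:ℝ) 1))
    (hf : ContDiffOn ℝ (m + 1) f (Icc (0:ℝ) 1))
    (hψ : ContDiffOn ℝ (m + 1) ψ (Icc (0:ℝ) 1))
    (p q : ℝ) (hp : p ∈ Icc (0:ℝ) 1) (hq : q = f p)
    (M : EuclideanSpace ℝ (Fin m) →ₗ[ℝ] EuclideanSpace ℝ (Fin m))
    (hM : ∀ n : Fin m,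
      M (iteratedDerivWithin ((n : ℕ) + 1) ψ (Icc (0:ℝ) 1) p)
        = iteratedDerivWithin ((n : ℕ) + 1) (ψ ∘ f) (Icc (0:ℝ) 1) p) :
    ∀ i : Fin m,
      M (iteratedDerivWithin ((i : ℕ) + 1) ψ (Icc (0:ℝ) 1) p)
          - (derivWithin f (Icc (0:ℝ) 1) p) ^ ((i : ℕ) + 1) •
              iteratedDerivWithin ((i : ℕ) + 1) ψ (Icc (0:ℝ) 1) q
        ∈ Submodule.span ℝ
            (Set.range fun j : Fin (i : ℕ) =>
              iteratedDerivWithin ((j : ℕ) + 1) ψ (Icc (0:ℝ) 1) q) := by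
  intro i
  subst hq
  have hle : ((i : ℕ) + 1 : WithTop ℕ∞) ≤ m + 1 := by exact_mod_cast Nat.succ_le_succ i.is_lt.le
  have hI : UniqueDiffOn ℝ (Icc (0:ℝ) 1) := uniqueDiffOn_Icc zero_lt_one
  rw [hM i]
  exact iteratedDerivWithin_scomp_sub_pow_smul_mem_span
    ((hψ _ (hfmaps hp)).of_le hle) ((hf p hp).of_le hle) hI hI hp hfmaps

/-- **Lemma JJ8** (upper triangular representation of the Eckmann–Ruelle linearization).
With respect to the canonical embedding bases `α = (ψ⁽¹⁾(p), …, ψ⁽ᵐ⁾(p))` at `P = ψ p` and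
`β = (ψ⁽¹⁾(q), …, ψ⁽ᵐ⁾(q))` at `Q = ψ q`, `q = f p`, the Eckmann–Ruelle linearization `M`
is upper triangular with diagonal entries `(f'(p))ʲ`; equivalently, for each `i`,
`M ψ⁽ⁱ⁾(p) − (f'(p))ⁱ ψ⁽ⁱ⁾(q)` lies in the span of `ψ⁽¹⁾(q), …, ψ⁽ⁱ⁻¹⁾(q)`. -/
theorem statement5 (m : ℕ) (hm : 1 ≤ m)
    (f : ℝ → ℝ) (ψ : ℝ → EuclideanSpace ℝ (Fin m))
    (hfmaps : MapsTo f (Icc (0:ℝ) 1) (Icc (0:ℝ) 1))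
    (hf : ContDiffOn ℝ (m + 1) f (Icc (0:ℝ) 1))
    (hψ : ContDiffOn ℝ (m + 1) ψ (Icc (0:ℝ) 1))
    (p q : ℝ) (hp : p ∈ Icc (0:ℝ) 1) (hq : q = f p)
    (hinjp : ∀ x ∈ Icc (0:ℝ) 1, ψ x = ψ p → x = p)
    (hinjq : ∀ x ∈ Icc (0:ℝ) 1, ψ x = ψ q → x = q)
    (hindepp : LinearIndependent ℝ
      (fun n : Fin m => iteratedDerivWithin ((n : ℕ) + 1) ψ (Icc (0:ℝ) 1) p))
    (hindepq : LinearIndependent ℝ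
      (fun n : Fin m => iteratedDerivWithin ((n : ℕ) + 1) ψ (Icc (0:ℝ) 1) q))
    (M : EuclideanSpace ℝ (Fin m) →ₗ[ℝ] EuclideanSpace ℝ (Fin m))
    (hM : ∀ n : Fin m,
      M (iteratedDerivWithin ((n : ℕ) + 1) ψ (Icc (0:ℝ) 1) p)
        = iteratedDerivWithin ((n : ℕ) + 1) (ψ ∘ f) (Icc (0:ℝ) 1) p) :
    ∀ i : Fin m,
      M (iteratedDerivWithin ((i : ℕ) + 1) ψ (Icc (0:ℝ) 1) p)
          - (derivWithin f (Icc (0:ℝ) 1) p) ^ ((i : ℕ) + 1) •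
              iteratedDerivWithin ((i : ℕ) + 1) ψ (Icc (0:ℝ) 1) q
        ∈ Submodule.span ℝ
            (Set.range fun j : Fin (i : ℕ) =>
              iteratedDerivWithin ((j : ℕ) + 1) ψ (Icc (0:ℝ) 1) q) :=
  statement5_general m f ψ hfmaps hf hψ p q hp hq M hM
end

section
/- Let S be a subset of ℝ^m whose convex hull contains a closed m-dimensional ball of radius r > 0. If A is an m × m real matrix such that ‖Av‖ ≤ B for all v ∈ S, then the operator norm satisfies ‖A‖ ≤ 2B/r. -/
/-- **Proposition JJ11.** If the convex hull of `S ⊆ ℝᵐ` contains a closed ball of radius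
`r > 0` and `‖A v‖ ≤ B` for all `v ∈ S`, then the operator norm of `A` is at most `2B/r`. -/
theorem statement9 (m : ℕ) (S : Set (EuclideanSpace ℝ (Fin m)))
    (r : ℝ) (hr : 0 < r)
    (hball : ∃ c, Metric.closedBall c r ⊆ convexHull ℝ S)
    (A : EuclideanSpace ℝ (Fin m) →L[ℝ] EuclideanSpace ℝ (Fin m))
    (B : ℝ) (hA : ∀ v ∈ S, ‖A v‖ ≤ B) :
    ‖A‖ ≤ 2 * B / r := by
  obtain ⟨c, hc⟩ := hball
  -- the bound extends to the convex hull
  have hhull : ∀ x ∈ convexHull ℝ S, ‖A x‖ ≤ B := by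
    intro x hx
    have hconv : Convex ℝ {x : EuclideanSpace ℝ (Fin m) | ‖A x‖ ≤ B} := by
      have : {x : EuclideanSpace ℝ (Fin m) | ‖A x‖ ≤ B}
          = A.toLinearMap ⁻¹' (Metric.closedBall 0 B) := by
        ext y; simp [Metric.mem_closedBall, dist_eq_norm]
      rw [this]
      exact (convex_closedBall (0 : EuclideanSpace ℝ (Fin m)) B).linear_preimage _
    exact convexHull_min (fun v hv => hA v hv) hconv hx
  have hcB : ‖A c‖ ≤ B := hhull c (hc (Metric.mem_closedBall_self hr.le))
  have hB : 0 ≤ B := le_trans (norm_nonneg _) hcB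
  apply A.opNorm_le_bound (by positivity)
  intro x
  rcases eq_or_ne x 0 with rfl | hx
  · simp
  · have hxn : (0:ℝ) < ‖x‖ := norm_pos_iff.mpr hx
    set u : EuclideanSpace ℝ (Fin m) := (r / ‖x‖) • x with hu
    have hun : ‖u‖ = r := by
      rw [hu, norm_smul, Real.norm_eq_abs, abs_of_pos (by positivity)]
      field_simp
    have hmem : c + u ∈ Metric.closedBall c r := by
      simp [Metric.mem_closedBall, dist_eq_norm, hun]
    have h1 : ‖A (c + u)‖ ≤ B := hhull _ (hc hmem)
    have hAu : ‖A u‖ ≤ 2 * B := by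
      have : A u = A (c + u) - A c := by simp [map_add]
      rw [this]
      calc ‖A (c + u) - A c‖ ≤ ‖A (c + u)‖ + ‖A c‖ := norm_sub_le _ _
        _ ≤ B + B := add_le_add h1 hcB
        _ = 2 * B := by ring
    have hAx : A u = (r / ‖x‖) • A x := by rw [hu, map_smul]
    have hkey : (r / ‖x‖) * ‖A x‖ ≤ 2 * B := by
      calc (r / ‖x‖) * ‖A x‖ = ‖A u‖ := by
            rw [hAx, norm_smul, Real.norm_eq_abs, abs_of_pos (by positivity)]
        _ ≤ 2 * B := hAu
    calc ‖A x‖ = (‖x‖ / r) * ((r / ‖x‖) * ‖A x‖) := by field_simp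
      _ ≤ (‖x‖ / r) * (2 * B) := by
          exact mul_le_mul_of_nonneg_left hkey (by positivity)
      _ = 2 * B / r * ‖x‖ := by ring
end

section
/- Let m ≥ 1. There exist constants ε_0 > 0 and C_rad > 0, depending only on m, with the following property: for every continuous function Pert : [−1,1] → ℝ^m with Pert(0) = 0 and max_{−1 ≤ h ≤ 1} ‖Pert(h)‖ ≤ ε_0/(m · m!), the convex hull of the set {V(h) : h ∈ [−1,1]}, where V(h) = (h, h²/2, …, h^m/m!) + Pert(h), contains a closed ball of radius C_rad in ℝ^m. -/
/-!
The curve `h ↦ (h, h²/2, …, hᵐ/m!)` lies in no affine hyperplane (a nonzero polynomial has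
finitely many roots), so the convex hull of its arc over `[-1, 1]` contains a ball `B(c, 3ε)`.
A perturbation of size at most `ε` moves that hull by Hausdorff distance at most `ε`, and for
convex sets this only shrinks an inscribed ball by `ε` (separate a point from the closed hull
by a hyperplane and push it `ε` further along the normal). Passing from the closure of the new
hull to its interior costs nothing for convex sets in finite dimension, leaving a ball of
radius `ε`.
-/

open Set

/-- The moment-type curve `h ↦ (h, h²/2, …, hᵐ/m!)` in `ℝᵐ`. -/
noncomputable def momentCurve (m : ℕ) (h : ℝ) : EuclideanSpace ℝ (Fin m) :=
  (WithLp.equiv 2 (Fin m → ℝ)).symm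
    (fun n => h ^ ((n : ℕ) + 1) / (Nat.factorial ((n : ℕ) + 1) : ℝ))

open Metric Pointwise Polynomial
open scoped RealInnerProductSpace Nat

lemma momentCurve_zero (m : ℕ) : momentCurve m 0 = 0 := by
  ext n
  simp [momentCurve]

lemma inner_momentCurve_eq_eval (m : ℕ) (w : EuclideanSpace ℝ (Fin m)) (h : ℝ) :
    ⟪w, momentCurve m h⟫ =
      (∑ n : Fin m, C (w n / ((n : ℕ) + 1)!) * X ^ ((n : ℕ) + 1)).eval h := by
  simp only [PiLp.inner_apply, RCLike.inner_apply, conj_trivial, eval_finsetSum, eval_mul,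
    eval_C, eval_pow, eval_X]
  refine Finset.sum_congr rfl fun n _ => ?_
  simp only [momentCurve, WithLp.equiv_symm_apply, PiLp.toLp_apply]
  ring

lemma coeff_sum_C_mul_X_pow_succ {R : Type*} [Semiring R] {m : ℕ} (a : Fin m → R) (k : Fin m) :
    (∑ n : Fin m, C (a n) * X ^ ((n : ℕ) + 1)).coeff ((k : ℕ) + 1) = a k := by
  simp [Fin.val_inj]

lemma span_momentCurve_image (m : ℕ) {s : Set ℝ} (hs : s.Infinite) :
    Submodule.span ℝ (momentCurve m '' s) = ⊤ := by
  rw [← Submodule.orthogonal_eq_bot_iff, Submodule.eq_bot_iff]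
  intro w hw
  set p := ∑ n : Fin m, C (w n / ((n : ℕ) + 1)!) * X ^ ((n : ℕ) + 1)
  have hp : p = 0 := eq_zero_of_infinite_isRoot p <| hs.mono fun h hh => by
    rw [mem_ofPred_eq, IsRoot, ← inner_momentCurve_eq_eval, real_inner_comm]
    exact (Submodule.mem_orthogonal _ _).mp hw _ (Submodule.subset_span (mem_image_of_mem _ hh))
  ext k
  have hk := coeff_sum_C_mul_X_pow_succ (fun n : Fin m => w n / ((n : ℕ) + 1)!) k
  change p.coeff _ = _ at hk
  rw [hp, coeff_zero, eq_comm, div_eq_zero_iff] at hk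
  simpa [Nat.factorial_ne_zero] using hk

lemma affineSpan_momentCurve_image (m : ℕ) {s : Set ℝ} (hs : s.Infinite) (h0 : 0 ∈ s) :
    affineSpan ℝ (momentCurve m '' s) = ⊤ := by
  have h0' : (0 : EuclideanSpace ℝ (Fin m)) ∈ momentCurve m '' s :=
    ⟨0, h0, momentCurve_zero m⟩
  rw [AffineSubspace.affineSpan_eq_top_iff_vectorSpan_eq_top_of_nonempty ℝ _ _ ⟨0, h0'⟩,
    eq_top_iff, ← span_momentCurve_image m hs, Submodule.span_le]
  intro v hv
  simpa using vsub_mem_vectorSpan ℝ hv h0'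

lemma closedBall_sub_subset_of_subset_add_closedBall {E : Type*} [NormedAddCommGroup E]
    [InnerProductSpace ℝ E] [CompleteSpace E] {K : Set E} (hK : Convex ℝ K) (hKc : IsClosed K)
    {c : E} {r ε : ℝ} (hε : 0 ≤ ε)
    (h : closedBall c r ⊆ K + closedBall 0 ε) : closedBall c (r - ε) ⊆ K := by
  intro x hx
  by_contra hxK
  obtain ⟨f, u, hfK, hfx⟩ := geometric_hahn_banach_closed_point hK hKc hxK
  set w := (InnerProductSpace.toDual ℝ E).symm f
  have hfw : ∀ z, f z = ⟪w, z⟫ := fun z => InnerProductSpace.toDual_symm_apply.symm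
  -- push `x` a distance `ε` further along the separating direction
  set y := x + (ε / ‖w‖) • w
  have hy : y ∈ closedBall c r := by
    have hyx : dist y x ≤ ε := by
      rw [dist_eq_norm, add_sub_cancel_left, norm_smul, Real.norm_eq_abs, abs_div, abs_norm,
        abs_of_nonneg hε]
      rcases eq_or_ne ‖w‖ 0 with h0 | h0 <;> simp [h0, hε]
    calc dist y c ≤ dist y x + dist x c := dist_triangle _ _ _
      _ ≤ ε + (r - ε) := add_le_add hyx (mem_closedBall.mp hx)
      _ = r := by ring
  have hfy : f y = f x + ε * ‖w‖ := by
    rw [map_add, map_smul, hfw w, real_inner_self_eq_norm_sq, smul_eq_mul]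
    rcases eq_or_ne ‖w‖ 0 with h0 | h0
    · simp [h0]
    · field_simp
  obtain ⟨k, hk, e, he, hke⟩ := h hy
  have hfe : f e ≤ ε * ‖w‖ := by
    rw [hfw, mul_comm]
    exact (real_inner_le_norm w e).trans
      (mul_le_mul_of_nonneg_left (mem_closedBall_zero_iff.mp he) (norm_nonneg w))
  rw [← hke, map_add] at hfy
  linarith [hfK k hk]

section NormedSpace

variable {E : Type*} [NormedAddCommGroup E] [NormedSpace ℝ E]

lemma convexHull_subset_convexHull_add_closedBall {s t : Set E} {ε : ℝ}
    (h : ∀ x ∈ s, ∃ y ∈ t, dist x y ≤ ε) :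
    convexHull ℝ s ⊆ convexHull ℝ t + closedBall 0 ε := by
  have hs : s ⊆ t + closedBall 0 ε := fun x hx => by
    obtain ⟨y, hy, hxy⟩ := h x hx
    exact ⟨y, hy, x - y, by rwa [mem_closedBall_zero_iff, ← dist_eq_norm], add_sub_cancel _ _⟩
  simpa only [convexHull_add, (convex_closedBall (0 : E) ε).convexHull_eq] using
    convexHull_mono (𝕜 := ℝ) hs

variable [FiniteDimensional ℝ E]

lemma affineSpan_closure (s : Set E) : affineSpan ℝ (closure s) = affineSpan ℝ s :=
  le_antisymm
    (affineSpan_le.mpr <|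
      (AffineSubspace.closed_of_finiteDimensional (affineSpan ℝ s)).closure_subset_iff.mpr
        (subset_affineSpan ℝ s))
    (affineSpan_mono ℝ subset_closure)

lemma Convex.interior_closure_eq_interior {s : Set E} (hs : Convex ℝ s) :
    interior (closure s) = interior s := by
  rcases (interior s).eq_empty_or_nonempty with h | h
  · rw [h, ← not_nonempty_iff_eq_empty, hs.closure.interior_nonempty_iff_affineSpan_eq_top,
      affineSpan_closure, ← hs.interior_nonempty_iff_affineSpan_eq_top, h]
    exact not_nonempty_empty
  · exact hs.interior_closure_eq_interior_of_nonempty_interior h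

end NormedSpace

lemma closedBall_subset_convexHull_of_forall_exists_dist_le {E : Type*} [NormedAddCommGroup E]
    [InnerProductSpace ℝ E] [FiniteDimensional ℝ E] {s t : Set E} {c : E} {r ε : ℝ}
    (hε : 0 < ε) (hball : closedBall c (r + 2 * ε) ⊆ convexHull ℝ s)
    (hst : ∀ x ∈ s, ∃ y ∈ t, dist x y ≤ ε) :
    closedBall c r ⊆ convexHull ℝ t := by
  have := FiniteDimensional.complete ℝ E
  have hconv := convex_convexHull ℝ t
  have hnear : closedBall c (r + 2 * ε) ⊆ closure (convexHull ℝ t) + closedBall 0 ε :=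
    (hball.trans (convexHull_subset_convexHull_add_closedBall hst)).trans
      (add_subset_add_right subset_closure)
  have hcl : closedBall c (r + ε) ⊆ closure (convexHull ℝ t) := by
    convert closedBall_sub_subset_of_subset_add_closedBall hconv.closure isClosed_closure hε.le
      hnear using 2
    ring
  calc closedBall c r ⊆ ball c (r + ε) := closedBall_subset_ball (lt_add_of_pos_right r hε)
    _ ⊆ interior (closure (convexHull ℝ t)) :=
      interior_maximal (ball_subset_closedBall.trans hcl) isOpen_ball
    _ = interior (convexHull ℝ t) := hconv.interior_closure_eq_interior
    _ ⊆ convexHull ℝ t := interior_subset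

/-- **Lemma JJ12.** There are constants `ε₀ > 0` and `C_rad > 0`, depending only on `m`,
such that for every continuous perturbation `Pert` on `[-1,1]` with `Pert 0 = 0` and
`‖Pert h‖ ≤ ε₀/(m·m!)`, the convex hull of the perturbed moment curve
`V(h) = (h, h²/2, …, hᵐ/m!) + Pert(h)`, `h ∈ [-1,1]`, contains a closed ball of
radius `C_rad`. -/
theorem statement10 (m : ℕ) (hm : 1 ≤ m) :
    ∃ ε₀ > (0:ℝ), ∃ Crad > (0:ℝ),
      ∀ Pert : ℝ → EuclideanSpace ℝ (Fin m),
        ContinuousOn Pert (Icc (-1) 1) → Pert 0 = 0 →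
        (∀ h ∈ Icc (-1:ℝ) 1, ‖Pert h‖ ≤ ε₀ / (m * Nat.factorial m)) →
        ∃ c, Metric.closedBall c Crad ⊆
          convexHull ℝ ((fun h => momentCurve m h + Pert h) '' Icc (-1) 1) := by
  obtain ⟨c, hc⟩ : (interior (convexHull ℝ (momentCurve m '' Icc (-1) 1))).Nonempty :=
    interior_convexHull_nonempty_iff_affineSpan_eq_top.mpr
      (affineSpan_momentCurve_image m (Icc_infinite (by norm_num)) (by norm_num))
  obtain ⟨r, hr, hball⟩ := isOpen_iff.mp isOpen_interior c hc
  have hmm : (0 : ℝ) < m * m ! := mul_pos (Nat.cast_pos.mpr hm) (by positivity)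
  refine ⟨r / 4 * (m * m !), by positivity, r / 4, by positivity, fun Pert _ _ hPert => ⟨c, ?_⟩⟩
  refine closedBall_subset_convexHull_of_forall_exists_dist_le
    (s := momentCurve m '' Icc (-1) 1) (ε := r / 4) (by positivity) ?_ ?_
  · exact (closedBall_subset_ball (by linarith)).trans (hball.trans interior_subset)
  · rintro _ ⟨h, hh, rfl⟩
    refine ⟨_, mem_image_of_mem _ hh, ?_⟩
    rw [dist_self_add_right, ← mul_div_cancel_right₀ (r / 4) hmm.ne']
    exact hPert h hh
end

section
/- Let m ≥ 1, let f : [0,1] → [0,1] and π : [0,1] → ℝ^m be C^{m+1}, and let p ∈ [0,1] with P = π(p) satisfy: π^{-1}(P) = {p}, and the vectors π^{(1)}(p), …, π^{(m)}(p) are linearly independent in ℝ^m. Let P_0, P_1, … be a trajectory of F = π ∘ f ∘ π^{-1} that is dense in the curve at P, i.e. there is a neighborhood U of P in ℝ^m such that {P_i : i ≥ 0} is dense in π([0,1]) ∩ U. Let {ε_k} be a decreasing sequence of positive numbers with ε_k → 0, and let {M_k} be a sequence of m × m matrices with W(M_k, P, ε_k) ≤ W(M(P), P, ε_k) for all k,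 where M(P) is the Eckmann–Ruelle linearization at P. Then M_k → M(P) in matrix norm as k → ∞; indeed there is a constant C such that ‖M_k − M(P)‖ ≤ C ε_k for all sufficiently large k. -/
/-!
Since `M(P)` maps the derivatives `ψ⁽ⁿ⁾(p)` to `(ψ ∘ f)⁽ⁿ⁾(p)` for `n ≤ m`, Taylor expansion gives
`‖ψ(f x) − ψ(f p) − M(P)(ψ x − P)‖ = O(|x − p|^(m+1))`, and `|x − p| = O(‖ψ x − P‖)` because `ψ`
is injective with `ψ'(p) ≠ 0`. So `W(M_k, P, ε) ≤ W(M(P), P, ε) = O(ε^(m+1))`, whence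
`N = M_k − M(P)` satisfies `‖N(P_i − P)‖ = O(ε^(m+1))` on the trajectory in the `ε`-ball and,
by density, `‖N(ψ x − P)‖ = O(ε^(m+1))` for `|x − p| ≤ ρε`. Evaluating at the `m` nodes
`p ± ρε j/m` and inverting the (Vandermonde) system of their Taylor expansions bounds
`(ρε)ⁿ ‖N ψ⁽ⁿ⁾(p)‖` by `O(ε^(m+1) (1 + ‖N‖))`. As the `ψ⁽ⁿ⁾(p)` form a basis,
`‖N‖ = O(ε (1 + ‖N‖))`, and for small `ε` this absorbs to `‖N‖ = O(ε)`.
-/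

open Set Filter Topology

/-- The worst-case linearization error of the map `L` over the `ε`-ball about `P`:
`W(L, P, ε) = sup { ‖P_{i+1} − F(P) − L(P_i − P)‖ : ‖P_i − P‖ ≤ ε }`, where `Pt i = P_i`
is the trajectory and `FP = F(P)`. -/
noncomputable def linW {E : Type*} [NormedAddCommGroup E]
    (Pt : ℕ → E) (FP : E) (L : E → E) (P : E) (ε : ℝ) : ℝ :=
  sSup {r : ℝ | ∃ i, ‖Pt i - P‖ ≤ ε ∧ r = ‖Pt (i + 1) - FP - L (Pt i - P)‖}

open scoped Nat

variable {E F : Type*} [NormedAddCommGroup E] [NormedSpace ℝ E]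
  [NormedAddCommGroup F] [NormedSpace ℝ F]

theorem taylorWithinEval_sub_eq_sum (g : ℝ → E) (n : ℕ) (s : Set ℝ) (p x : ℝ) :
    taylorWithinEval g n s p x - g p =
      ∑ k : Fin n, (((k + 1 : ℕ)! : ℝ)⁻¹ * (x - p) ^ (k + 1 : ℕ)) •
        iteratedDerivWithin (k + 1) g s p := by
  rw [taylor_within_apply, Finset.sum_range_succ', Fin.sum_univ_eq_sum_range
    (fun k => (((k + 1 : ℕ)! : ℝ)⁻¹ * (x - p) ^ (k + 1 : ℕ)) • iteratedDerivWithin (k + 1) g s p)]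
  simp

theorem exists_norm_sub_taylorWithinEval_le {g : ℝ → E} {n : ℕ} {a b p : ℝ}
    (hg : ContDiffOn ℝ (n + 1) g (Icc a b)) (hp : p ∈ Icc a b) :
    ∃ C, ∀ x ∈ Icc a b, ‖g x - taylorWithinEval g n (Icc a b) p x‖ ≤ C * |x - p| ^ (n + 1) := by
  rcases (hp.1.trans hp.2).eq_or_lt with rfl | hab
  · refine ⟨0, fun x hx => ?_⟩
    obtain rfl : x = p := by grind
    simp [taylorWithinEval_self]
  have hu : UniqueDiffOn ℝ (Icc a b) := uniqueDiffOn_Icc hab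
  obtain ⟨C, hC⟩ := isCompact_Icc.exists_bound_of_continuousOn
    (hg.continuousOn_iteratedDerivWithin le_rfl hu)
  refine ⟨C / n !, fun x hx => ?_⟩
  have hsub : uIcc p x ⊆ Icc a b := uIcc_subset_Icc hp hx
  have hderiv : ∀ t ∈ uIcc p x, HasDerivWithinAt (taylorWithinEval g n (Icc a b) · x)
      (((n ! : ℝ)⁻¹ * (x - t) ^ n) • iteratedDerivWithin (n + 1) g (Icc a b) t) (uIcc p x) t :=
    fun t ht => (hasDerivWithinAt_taylorWithinEval_at_Icc x hab (hsub ht) hg.of_succ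
      (hg.differentiableOn_iteratedDerivWithin (mod_cast n.lt_succ_self) hu)).mono hsub
  have hbound : ∀ t ∈ uIcc p x,
      ‖((n ! : ℝ)⁻¹ * (x - t) ^ n) • iteratedDerivWithin (n + 1) g (Icc a b) t‖ ≤
        (n ! : ℝ)⁻¹ * |x - p| ^ n * C := by
    intro t ht
    have hxt : |x - t| ≤ |x - p| := abs_sub_right_of_mem_uIcc ht
    rw [norm_smul, Real.norm_eq_abs, abs_mul, abs_pow, abs_inv, Nat.abs_cast]
    gcongr
    exact hC t (hsub ht)
  have := Convex.norm_image_sub_le_of_norm_hasDerivWithin_le hderiv hbound (convex_uIcc p x)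
    left_mem_uIcc right_mem_uIcc
  rw [taylorWithinEval_self, Real.norm_eq_abs] at this
  refine this.trans_eq ?_
  ring

theorem exists_norm_sub_sub_map_sub_le {g : ℝ → E} {h : ℝ → F} {n : ℕ} {a b p : ℝ}
    (hg : ContDiffOn ℝ (n + 1) g (Icc a b)) (hh : ContDiffOn ℝ (n + 1) h (Icc a b))
    (hp : p ∈ Icc a b) (T : E →L[ℝ] F)
    (hT : ∀ k : Fin n, T (iteratedDerivWithin (k + 1) g (Icc a b) p) =
      iteratedDerivWithin (k + 1) h (Icc a b) p) :
    ∃ C, ∀ x ∈ Icc a b, ‖h x - h p - T (g x - g p)‖ ≤ C * |x - p| ^ (n + 1) := by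
  obtain ⟨Cg, hCg⟩ := exists_norm_sub_taylorWithinEval_le hg hp
  obtain ⟨Ch, hCh⟩ := exists_norm_sub_taylorWithinEval_le hh hp
  refine ⟨Ch + ‖T‖ * Cg, fun x hx => ?_⟩
  set Tg := taylorWithinEval g n (Icc a b) p x
  set Th := taylorWithinEval h n (Icc a b) p x
  have htaylor : Th - h p = T (Tg - g p) := by
    simp only [Th, Tg, taylorWithinEval_sub_eq_sum, map_sum, map_smul, hT]
  have hsplit : h x - h p - T (g x - g p) =
      (h x - Th) - T (g x - Tg) + (Th - h p - T (Tg - g p)) := by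
    simp only [map_sub]; abel
  calc ‖h x - h p - T (g x - g p)‖ = ‖(h x - Th) - T (g x - Tg)‖ := by
        rw [hsplit, htaylor, sub_self, add_zero]
    _ ≤ Ch * |x - p| ^ (n + 1) + ‖T‖ * (Cg * |x - p| ^ (n + 1)) := by
        grw [norm_sub_le, T.le_opNorm, hCh x hx, hCg x hx]
    _ = (Ch + ‖T‖ * Cg) * |x - p| ^ (n + 1) := by ring

theorem exists_abs_sub_le_mul_norm_sub {g : ℝ → E} {s : Set ℝ} {p : ℝ} {v : E}
    (hs : IsCompact s) (hg : ContinuousOn g s) (hinj : ∀ x ∈ s, g x = g p → x = p)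
    (hderiv : HasDerivWithinAt g v s p) (hv : v ≠ 0) :
    ∃ c, ∀ x ∈ s, |x - p| ≤ c * ‖g x - g p‖ := by
  obtain ⟨c₁, hc₁⟩ :=
    ((hderiv.isTheta_sub hv).2.comp_tendsto (tendsto_id.prodMk tendsto_const_pure)).bound
  obtain ⟨u, hu, hpu, hus⟩ := mem_nhdsWithin.1 hc₁
  have hne : ∀ x ∈ s \ u, g x - g p ≠ 0 := fun x hx h =>
    hx.2 (hinj x hx.1 (sub_eq_zero.1 h) ▸ hpu)
  have hcont : ContinuousOn (fun x => (x - p) / ‖g x - g p‖) (s \ u) :=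
    (continuousOn_id.sub continuousOn_const).div
      ((hg.mono sdiff_subset).sub continuousOn_const).norm fun x hx => norm_ne_zero_iff.2 (hne x hx)
  obtain ⟨c₂, hc₂⟩ := (hs.diff hu).exists_bound_of_continuousOn hcont
  refine ⟨max c₁ c₂, fun x hx => ?_⟩
  by_cases hxu : x ∈ u
  · exact (hus ⟨hxu, hx⟩).trans (mul_le_mul_of_nonneg_right (le_max_left _ _) (norm_nonneg _))
  · have := hc₂ x ⟨hx, hxu⟩
    rw [norm_div, norm_norm, div_le_iff₀ (norm_pos_iff.2 (hne x ⟨hx, hxu⟩))] at this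
    exact this.trans (mul_le_mul_of_nonneg_right (le_max_right _ _) (norm_nonneg _))

theorem exists_norm_comp_sub_sub_le_pow {n : ℕ} (hn : 1 ≤ n) {f : ℝ → ℝ} {ψ : ℝ → E}
    (hfmaps : MapsTo f (Icc 0 1) (Icc 0 1)) (hf : ContDiffOn ℝ (n + 1) f (Icc 0 1))
    (hψ : ContDiffOn ℝ (n + 1) ψ (Icc 0 1)) {p : ℝ} (hp : p ∈ Icc (0 : ℝ) 1)
    (hinj : ∀ x ∈ Icc (0 : ℝ) 1, ψ x = ψ p → x = p)
    (hindep : LinearIndependent ℝ fun k : Fin n => iteratedDerivWithin (k + 1) ψ (Icc 0 1) p)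
    {M : E →L[ℝ] E}
    (hM : ∀ k : Fin n, M (iteratedDerivWithin (k + 1) ψ (Icc 0 1) p) =
      iteratedDerivWithin (k + 1) (ψ ∘ f) (Icc 0 1) p) :
    ∃ C, ∀ x ∈ Icc (0 : ℝ) 1,
      ‖ψ (f x) - ψ (f p) - M (ψ x - ψ p)‖ ≤ C * ‖ψ x - ψ p‖ ^ (n + 1) := by
  obtain ⟨C, hC⟩ := exists_norm_sub_sub_map_sub_le hψ (hψ.comp hf hfmaps) hp M hM
  have hderiv : HasDerivWithinAt ψ (iteratedDerivWithin 1 ψ (Icc 0 1) p) (Icc 0 1) p := by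
    rw [iteratedDerivWithin_one]
    exact (hψ.differentiableOn (by simp) p hp).hasDerivWithinAt
  obtain ⟨c, hc⟩ := exists_abs_sub_le_mul_norm_sub isCompact_Icc hψ.continuousOn hinj hderiv
    (by simpa using hindep.ne_zero ⟨0, hn⟩)
  refine ⟨|C| * |c| ^ (n + 1), fun x hx => ?_⟩
  have hxp : |x - p| ≤ |c| * ‖ψ x - ψ p‖ :=
    (hc x hx).trans (mul_le_mul_of_nonneg_right (le_abs_self c) (norm_nonneg _))
  calc ‖ψ (f x) - ψ (f p) - M (ψ x - ψ p)‖ ≤ C * |x - p| ^ (n + 1) := hC x hx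
    _ ≤ |C| * (|c| * ‖ψ x - ψ p‖) ^ (n + 1) := by gcongr; exact le_abs_self C
    _ = |C| * |c| ^ (n + 1) * ‖ψ x - ψ p‖ ^ (n + 1) := by ring

theorem isUnit_det_pow_succ_div_factorial {n : ℕ} {s : Fin n → ℝ} (hs : Function.Injective s)
    (hs0 : ∀ j, s j ≠ 0) :
    IsUnit (Matrix.of fun j k : Fin n => s j ^ (k + 1 : ℕ) / ((k + 1 : ℕ)! : ℝ)).det := by
  have hfactor : (Matrix.of fun j k : Fin n => s j ^ (k + 1 : ℕ) / ((k + 1 : ℕ)! : ℝ)) =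
      Matrix.diagonal s * Matrix.vandermonde s *
        Matrix.diagonal fun k : Fin n => (((k + 1 : ℕ)! : ℝ))⁻¹ := by
    ext j k
    simp [Matrix.vandermonde, div_eq_mul_inv, pow_succ, mul_comm]
  rw [hfactor, Matrix.det_mul, Matrix.det_mul, Matrix.det_diagonal, Matrix.det_diagonal,
    Matrix.det_vandermonde, isUnit_iff_ne_zero]
  refine mul_ne_zero (mul_ne_zero (Finset.prod_ne_zero_iff.2 fun j _ => hs0 j)
    (Finset.prod_ne_zero_iff.2 fun i _ => Finset.prod_ne_zero_iff.2 fun j hj => ?_))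
    (Finset.prod_ne_zero_iff.2 fun k _ => by positivity)
  exact sub_ne_zero.2 (hs.ne (Finset.mem_Ioi.1 hj).ne')

theorem Matrix.exists_norm_le_of_isUnit_det {ι : Type*} [Fintype ι] [DecidableEq ι]
    {B : Matrix ι ι ℝ} (hB : IsUnit B.det) :
    ∃ K, 0 ≤ K ∧ ∀ (u : ι → F) (β : ℝ), (∀ j, ‖∑ i, B j i • u i‖ ≤ β) → ∀ i, ‖u i‖ ≤ K * β := by
  refine ⟨∑ i, ∑ j, |B⁻¹ i j|, by positivity, fun u β hβ i => ?_⟩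
  have hu : u i = ∑ j, B⁻¹ i j • ∑ i', B j i' • u i' := by
    simp only [Finset.smul_sum, smul_smul]
    rw [Finset.sum_comm]
    simp [← Finset.sum_smul, ← Matrix.mul_apply, Matrix.nonsing_inv_mul B hB, Matrix.one_apply]
  have hβ0 : 0 ≤ β := (norm_nonneg _).trans (hβ i)
  calc ‖u i‖ ≤ ∑ j, |B⁻¹ i j| * β := by
        rw [hu]
        refine (norm_sum_le _ _).trans (Finset.sum_le_sum fun j _ => ?_)
        rw [norm_smul, Real.norm_eq_abs]
        exact mul_le_mul_of_nonneg_left (hβ j) (abs_nonneg _)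
    _ ≤ (∑ i, ∑ j, |B⁻¹ i j|) * β := by
        rw [← Finset.sum_mul]
        exact mul_le_mul_of_nonneg_right (Finset.single_le_sum (f := fun i => ∑ j, |B⁻¹ i j|)
          (fun _ _ => by positivity) (Finset.mem_univ i)) hβ0

theorem exists_pow_mul_norm_apply_iteratedDerivWithin_le {g : ℝ → E} {n : ℕ} {a b p : ℝ}
    (hg : ContDiffOn ℝ (n + 1) g (Icc a b)) (hp : p ∈ Icc a b) :
    ∃ K, 0 ≤ K ∧ ∀ (N : E →L[ℝ] F) (h B : ℝ), 0 < h → h ≤ (b - a) / 2 →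
      (∀ x ∈ Icc a b, |x - p| ≤ h → ‖N (g x - g p)‖ ≤ B) →
      ∀ k : Fin n, h ^ (k + 1 : ℕ) * ‖N (iteratedDerivWithin (k + 1) g (Icc a b) p)‖ ≤
        K * (B + ‖N‖ * h ^ (n + 1)) := by
  obtain ⟨C, hC⟩ := exists_norm_sub_taylorWithinEval_le hg hp
  set s : Fin n → ℝ := fun j => (j + 1 : ℕ) / n
  have hs0 : ∀ j, 0 < s j := fun j => div_pos (by positivity) (by exact_mod_cast j.pos)
  have hs1 : ∀ j, s j ≤ 1 := fun j => div_le_one_of_le₀ (by exact_mod_cast j.2) (by positivity)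
  have hsinj : Function.Injective s := fun i j hij => by
    have hn : (n : ℝ) ≠ 0 := by exact_mod_cast i.pos.ne'
    simpa [s, div_left_inj' hn, Fin.ext_iff] using hij
  set A : Matrix (Fin n) (Fin n) ℝ := .of fun j k => s j ^ (k + 1 : ℕ) / ((k + 1 : ℕ)! : ℝ)
  obtain ⟨K, hK0, hK⟩ := Matrix.exists_norm_le_of_isUnit_det (F := F) (B := A)
    (isUnit_det_pow_succ_div_factorial hsinj fun j => (hs0 j).ne')
  refine ⟨K * (|C| + 1), by positivity, fun N h B hh hhab hB k => ?_⟩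
  have hB0 : 0 ≤ B := by simpa using hB p hp (by simpa using hh.le)
  obtain ⟨d, hd, hmem⟩ : ∃ d, |d| = h ∧ ∀ t ∈ Icc (0 : ℝ) 1, p + t * d ∈ Icc a b := by
    rcases le_total (p + h) b with hpb | hpb
    · exact ⟨h, abs_of_pos hh, fun t ht => ⟨by nlinarith [ht.1, hp.1], by nlinarith [ht.2]⟩⟩
    · exact ⟨-h, by simp [abs_of_pos hh],
        fun t ht => ⟨by nlinarith [ht.2], by nlinarith [ht.1, hp.2]⟩⟩
  -- Taylor expansion at the node `p + s j * d` is a linear system with matrix `A` in the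
  -- unknowns `d ^ (k + 1) • N (g⁽ᵏ⁺¹⁾ p)`.
  have hnode : ∀ j, ‖∑ k, A j k •
      (d ^ (k + 1 : ℕ) • N (iteratedDerivWithin (k + 1) g (Icc a b) p))‖ ≤
        B + ‖N‖ * (|C| * h ^ (n + 1)) := by
    intro j
    set x := p + s j * d
    have hx : x ∈ Icc a b := hmem (s j) ⟨(hs0 j).le, hs1 j⟩
    have hxp : |x - p| ≤ h := by
      rw [add_sub_cancel_left, abs_mul, hd, abs_of_pos (hs0 j)]
      exact mul_le_of_le_one_left hh.le (hs1 j)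
    have hsum : ∑ k, A j k • (d ^ (k + 1 : ℕ) • N (iteratedDerivWithin (k + 1) g (Icc a b) p)) =
          N (g x - g p) - N (g x - taylorWithinEval g n (Icc a b) p x) := by
      rw [← map_sub, sub_sub_sub_cancel_left, taylorWithinEval_sub_eq_sum, map_sum]
      refine Finset.sum_congr rfl fun k _ => ?_
      rw [map_smul, smul_smul, add_sub_cancel_left]
      simp only [A, Matrix.of_apply]
      ring_nf
    rw [hsum]
    grw [norm_sub_le, hB x hx hxp, N.le_opNorm, hC x hx, le_abs_self C, hxp]
  have := hK _ _ hnode k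
  rw [norm_smul, norm_pow, Real.norm_eq_abs, hd] at this
  refine this.trans ?_
  rw [mul_assoc]
  gcongr
  nlinarith [abs_nonneg C, mul_nonneg (norm_nonneg N) (pow_nonneg hh.le (n + 1))]

theorem exists_opNorm_le_of_norm_apply_sub_le [FiniteDimensional ℝ E] {g : ℝ → E} {n : ℕ}
    {a b p : ℝ} (hg : ContDiffOn ℝ (n + 1) g (Icc a b)) (hp : p ∈ Icc a b)
    (hindep : LinearIndependent ℝ fun k : Fin n => iteratedDerivWithin (k + 1) g (Icc a b) p)
    (hn : Module.finrank ℝ E = n) :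
    ∃ K, 0 ≤ K ∧ ∀ (N : E →L[ℝ] F) (h B : ℝ), 0 < h → h ≤ 1 → h ≤ (b - a) / 2 →
      (∀ x ∈ Icc a b, |x - p| ≤ h → ‖N (g x - g p)‖ ≤ B) → ‖N‖ ≤ K * (B / h ^ n + ‖N‖ * h) := by
  obtain ⟨K₁, hK₁0, hK₁⟩ := exists_pow_mul_norm_apply_iteratedDerivWithin_le (F := F) hg hp
  obtain ⟨K₂, hK₂0, hK₂⟩ := (basisOfLinearIndependentOfCardEqFinrank' _ hindep
    (by simp [hn])).exists_opNorm_le (F := F)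
  refine ⟨K₂ * K₁, by positivity, fun N h B hh hh1 hhab hB => ?_⟩
  have hB0 : 0 ≤ B := by simpa using hB p hp (by simpa using hh.le)
  rw [mul_assoc]
  refine hK₂ (by positivity) fun k => ?_
  rw [coe_basisOfLinearIndependentOfCardEqFinrank']
  have hk := hK₁ N h B hh hhab hB k
  have hpow₁ : h ^ n ≤ h ^ (k + 1 : ℕ) := pow_le_pow_of_le_one hh.le hh1 k.2
  have hpow₂ : h ^ (n + 1) ≤ h ^ (k + 1 : ℕ) * h := by
    rw [← pow_succ]; exact pow_le_pow_of_le_one hh.le hh1 (by omega)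
  rw [← mul_le_mul_iff_right₀ (pow_pos hh (k + 1 : ℕ))]
  refine hk.trans ?_
  calc K₁ * (B + ‖N‖ * h ^ (n + 1))
      ≤ K₁ * (h ^ (k + 1 : ℕ) * (B / h ^ n) + ‖N‖ * (h ^ (k + 1 : ℕ) * h)) := by
        gcongr
        rw [mul_div_assoc', le_div_iff₀ (by positivity)]
        nlinarith
    _ = _ := by ring

theorem norm_sub_le_linW {Pt : ℕ → E} (hPt : Bornology.IsBounded (range Pt)) (FP P : E)
    (L : E →L[ℝ] E) {ε : ℝ} {i : ℕ} (hi : ‖Pt i - P‖ ≤ ε) :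
    ‖Pt (i + 1) - FP - L (Pt i - P)‖ ≤ linW Pt FP L P ε := by
  obtain ⟨R, hR⟩ := hPt.exists_norm_le
  refine le_csSup ⟨R + ‖FP‖ + ‖L‖ * (R + ‖P‖), ?_⟩ ⟨i, hi, rfl⟩
  rintro _ ⟨j, -, rfl⟩
  have hj := hR _ (mem_range_self j)
  have hj' := hR _ (mem_range_self (j + 1))
  calc ‖Pt (j + 1) - FP - L (Pt j - P)‖ ≤ ‖Pt (j + 1)‖ + ‖FP‖ + ‖L‖ * (‖Pt j‖ + ‖P‖) := by
        grw [norm_sub_le, norm_sub_le, L.le_opNorm, norm_sub_le]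
    _ ≤ R + ‖FP‖ + ‖L‖ * (R + ‖P‖) := by gcongr

theorem norm_apply_sub_le_of_mem_closure {S : Set E} (N : E →L[ℝ] F) {P y : E} {ε B : ℝ}
    (h : ∀ z ∈ S, ‖z - P‖ ≤ ε → ‖N (z - P)‖ ≤ B) (hy : y ∈ closure S) (hyε : ‖y - P‖ < ε) :
    ‖N (y - P)‖ ≤ B := by
  have : y ∈ closure (Metric.ball P ε ∩ S) :=
    Metric.isOpen_ball.inter_closure ⟨mem_ball_iff_norm.2 hyε, hy⟩
  exact closure_minimal (fun z hz => h z hz.2 (mem_ball_iff_norm.1 hz.1).le)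
    (isClosed_le (by fun_prop : Continuous fun z => ‖N (z - P)‖) continuous_const) this

theorem norm_sub_apply_le_of_linW_le {Pt : ℕ → E} (hPt : Bornology.IsBounded (range Pt))
    {FP P : E} {L M : E →L[ℝ] E} {ε B : ℝ}
    (hM : ∀ i, ‖Pt i - P‖ ≤ ε → ‖Pt (i + 1) - FP - M (Pt i - P)‖ ≤ B)
    (hLM : linW Pt FP L P ε ≤ linW Pt FP M P ε) {y : E} (hy : y ∈ closure (range Pt))
    (hyε : ‖y - P‖ < ε) :
    ‖(L - M) (y - P)‖ ≤ 2 * B := by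
  refine norm_apply_sub_le_of_mem_closure (L - M) (fun z hz hzε => ?_) hy hyε
  obtain ⟨i, rfl⟩ := hz
  have hL : ‖Pt (i + 1) - FP - L (Pt i - P)‖ ≤ B :=
    (norm_sub_le_linW hPt FP P L hzε).trans <| hLM.trans <|
      Real.sSup_le (by rintro _ ⟨j, hj, rfl⟩; exact hM j hj) ((norm_nonneg _).trans (hM i hzε))
  calc ‖(L - M) (Pt i - P)‖
      = ‖(Pt (i + 1) - FP - M (Pt i - P)) - (Pt (i + 1) - FP - L (Pt i - P))‖ := by
        congr 1; simp only [sub_apply]; abel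
    _ ≤ B + B := by grw [norm_sub_le, hM i hzε, hL]
    _ = 2 * B := by ring

theorem exists_opNorm_sub_le_of_linW_le [FiniteDimensional ℝ E] {n : ℕ}
    (hn : Module.finrank ℝ E = n) (hn1 : 1 ≤ n) {f : ℝ → ℝ} {ψ : ℝ → E}
    (hfmaps : MapsTo f (Icc 0 1) (Icc 0 1)) (hf : ContDiffOn ℝ (n + 1) f (Icc 0 1))
    (hψ : ContDiffOn ℝ (n + 1) ψ (Icc 0 1)) {p : ℝ} (hp : p ∈ Icc (0 : ℝ) 1)
    (hinj : ∀ x ∈ Icc (0 : ℝ) 1, ψ x = ψ p → x = p)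
    (hindep : LinearIndependent ℝ fun k : Fin n => iteratedDerivWithin (k + 1) ψ (Icc 0 1) p)
    {traj : ℕ → ℝ} (htrajmem : ∀ i, traj i ∈ Icc (0 : ℝ) 1) (htraj : ∀ i, traj (i + 1) = f (traj i))
    {U : Set E} (hU : U ∈ 𝓝 (ψ p))
    (hdense : ψ '' Icc 0 1 ∩ U ⊆ closure (range fun i => ψ (traj i)))
    {M : E →L[ℝ] E}
    (hM : ∀ k : Fin n, M (iteratedDerivWithin (k + 1) ψ (Icc 0 1) p) =
      iteratedDerivWithin (k + 1) (ψ ∘ f) (Icc 0 1) p) :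
    ∃ C e₀, 0 < e₀ ∧ ∀ (L : E →L[ℝ] E) (e : ℝ), 0 < e → e ≤ e₀ →
      linW (fun i => ψ (traj i)) (ψ (f p)) L (ψ p) e ≤
        linW (fun i => ψ (traj i)) (ψ (f p)) M (ψ p) e → ‖L - M‖ ≤ C * e := by
  obtain ⟨C, hC⟩ := exists_norm_comp_sub_sub_le_pow hn1 hfmaps hf hψ hp hinj hindep hM
  obtain ⟨Λ, hΛ⟩ := exists_norm_sub_taylorWithinEval_le (n := 0)
    (hψ.of_le (by exact_mod_cast Nat.le_add_left 1 n)) hp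
  obtain ⟨K, hK0, hK⟩ := exists_opNorm_le_of_norm_apply_sub_le (F := E) hψ hp hindep hn
  obtain ⟨r, hr, hrU⟩ := Metric.mem_nhds_iff.1 hU
  have hbdd : Bornology.IsBounded (range fun i => ψ (traj i)) :=
    (isCompact_Icc.image_of_continuousOn hψ.continuousOn).isBounded.subset
      (range_subset_iff.2 fun i => mem_image_of_mem ψ (htrajmem i))
  set ρ : ℝ := 1 / (2 * (|Λ| + 1))
  have hρ : 0 < ρ := by positivity
  have hρ2 : ρ ≤ 1 / 2 := one_div_le_one_div_of_le two_pos (by linarith [abs_nonneg Λ])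
  refine ⟨2 * (K * (2 * |C| / ρ ^ n)), min (min 1 r) (1 / (2 * (K * ρ + 1))), by positivity,
    fun L e he he₀ hLM => ?_⟩
  simp only [le_min_iff] at he₀
  obtain ⟨⟨he1, her⟩, heK⟩ := he₀
  have hMerr : ∀ i, ‖ψ (traj i) - ψ p‖ ≤ e →
      ‖ψ (traj (i + 1)) - ψ (f p) - M (ψ (traj i) - ψ p)‖ ≤ |C| * e ^ (n + 1) := fun i hi => by
    rw [htraj]
    grw [hC _ (htrajmem i), le_abs_self C, hi]
  have hcurve : ∀ x ∈ Icc (0 : ℝ) 1, |x - p| ≤ ρ * e →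
      ‖(L - M) (ψ x - ψ p)‖ ≤ 2 * (|C| * e ^ (n + 1)) := by
    intro x hx hxp
    have hxe : ‖ψ x - ψ p‖ ≤ e / 2 := by
      have hΛx := hΛ x hx
      rw [taylor_within_zero_eval, pow_one] at hΛx
      calc ‖ψ x - ψ p‖ ≤ Λ * |x - p| := hΛx
        _ ≤ (|Λ| + 1) * (ρ * e) :=
          mul_le_mul (by linarith [le_abs_self Λ]) hxp (abs_nonneg _) (by positivity)
        _ = e / 2 := by simp only [ρ]; field_simp
    refine norm_sub_apply_le_of_linW_le hbdd hMerr hLM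
      (hdense ⟨mem_image_of_mem ψ hx, hrU ?_⟩) (by linarith)
    rw [Metric.mem_ball, dist_eq_norm]
    linarith
  have hN := hK (L - M) (ρ * e) _ (by positivity) (by nlinarith) (by nlinarith) hcurve
  have hpow : 2 * (|C| * e ^ (n + 1)) / (ρ * e) ^ n = 2 * |C| / ρ ^ n * e := by
    field_simp
    ring
  have hKρe : K * ρ * e ≤ 1 / 2 := by
    have := (le_div_iff₀ (by positivity)).1 heK
    nlinarith
  rw [hpow] at hN
  nlinarith [norm_nonneg (L - M)]

theorem statement12_general (m : ℕ) (hm : 1 ≤ m)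
    (f : ℝ → ℝ) (ψ : ℝ → EuclideanSpace ℝ (Fin m))
    (hfmaps : MapsTo f (Icc (0:ℝ) 1) (Icc (0:ℝ) 1))
    (hf : ContDiffOn ℝ (m + 1) f (Icc (0:ℝ) 1))
    (hψ : ContDiffOn ℝ (m + 1) ψ (Icc (0:ℝ) 1))
    (p : ℝ) (hp : p ∈ Icc (0:ℝ) 1)
    (P : EuclideanSpace ℝ (Fin m)) (hP : P = ψ p)
    (hinj : ∀ x ∈ Icc (0:ℝ) 1, ψ x = P → x = p)
    (hindep : LinearIndependent ℝ
      (fun n : Fin m => iteratedDerivWithin ((n : ℕ) + 1) ψ (Icc (0:ℝ) 1) p))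
    (traj : ℕ → ℝ) (htrajmem : ∀ i, traj i ∈ Icc (0:ℝ) 1)
    (htraj : ∀ i, traj (i + 1) = f (traj i))
    -- the trajectory is dense in the curve at `P`
    (hdense : ∃ U ∈ 𝓝 P,
      ψ '' Icc (0:ℝ) 1 ∩ U ⊆ closure (Set.range fun i => ψ (traj i)))
    -- the Eckmann–Ruelle linearization at `P`
    (M : EuclideanSpace ℝ (Fin m) →L[ℝ] EuclideanSpace ℝ (Fin m))
    (hM : ∀ n : Fin m,
      M (iteratedDerivWithin ((n : ℕ) + 1) ψ (Icc (0:ℝ) 1) p)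
        = iteratedDerivWithin ((n : ℕ) + 1) (ψ ∘ f) (Icc (0:ℝ) 1) p)
    (ε : ℕ → ℝ) (hεpos : ∀ k, 0 < ε k)
    (hεlim : Tendsto ε atTop (𝓝 0))
    (Mk : ℕ → (EuclideanSpace ℝ (Fin m) →L[ℝ] EuclideanSpace ℝ (Fin m)))
    (hMk : ∀ k, linW (fun i => ψ (traj i)) (ψ (f p)) (⇑(Mk k)) P (ε k)
      ≤ linW (fun i => ψ (traj i)) (ψ (f p)) (⇑M) P (ε k)) :
    Tendsto Mk atTop (𝓝 M) ∧
      ∃ C : ℝ, ∀ᶠ k in atTop, ‖Mk k - M‖ ≤ C * ε k := by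
  subst hP
  obtain ⟨U, hU, hdenseU⟩ := hdense
  obtain ⟨C, e₀, he₀, hC⟩ := exists_opNorm_sub_le_of_linW_le finrank_euclideanSpace_fin hm
    hfmaps hf hψ hp hinj hindep htrajmem htraj hU hdenseU hM
  have hbound : ∀ᶠ k in atTop, ‖Mk k - M‖ ≤ C * ε k :=
    (hεlim.eventually (eventually_le_nhds he₀)).mono fun k hk => hC _ _ (hεpos k) hk (hMk k)
  refine ⟨tendsto_iff_norm_sub_tendsto_zero.2 ?_, C, hbound⟩
  exact squeeze_zero' (Eventually.of_forall fun k => norm_nonneg _) hbound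
    (by simpa using hεlim.const_mul C)

/-- **Theorem JJ10** (Convergence Theorem, ℝ¹ → ℝᵐ).
If the reconstructed trajectory is dense in the curve at `P` and `M_k` is a sequence of
matrices which do at least as well as the Eckmann–Ruelle linearization `M(P)` over
`ε_k`-balls, `ε_k ↓ 0`, then `M_k → M(P)`; in fact `‖M_k − M(P)‖ ≤ C ε_k` eventually. -/
theorem statement12 (m : ℕ) (hm : 1 ≤ m)
    (f : ℝ → ℝ) (ψ : ℝ → EuclideanSpace ℝ (Fin m))
    (hfmaps : MapsTo f (Icc (0:ℝ) 1) (Icc (0:ℝ) 1))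
    (hf : ContDiffOn ℝ (m + 1) f (Icc (0:ℝ) 1))
    (hψ : ContDiffOn ℝ (m + 1) ψ (Icc (0:ℝ) 1))
    (p : ℝ) (hp : p ∈ Icc (0:ℝ) 1)
    (P : EuclideanSpace ℝ (Fin m)) (hP : P = ψ p)
    (hinj : ∀ x ∈ Icc (0:ℝ) 1, ψ x = P → x = p)
    (hindep : LinearIndependent ℝ
      (fun n : Fin m => iteratedDerivWithin ((n : ℕ) + 1) ψ (Icc (0:ℝ) 1) p))
    (traj : ℕ → ℝ) (htrajmem : ∀ i, traj i ∈ Icc (0:ℝ) 1)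
    (htraj : ∀ i, traj (i + 1) = f (traj i))
    -- the trajectory is dense in the curve at `P`
    (hdense : ∃ U ∈ 𝓝 P,
      ψ '' Icc (0:ℝ) 1 ∩ U ⊆ closure (Set.range fun i => ψ (traj i)))
    -- the Eckmann–Ruelle linearization at `P`
    (M : EuclideanSpace ℝ (Fin m) →L[ℝ] EuclideanSpace ℝ (Fin m))
    (hM : ∀ n : Fin m,
      M (iteratedDerivWithin ((n : ℕ) + 1) ψ (Icc (0:ℝ) 1) p)
        = iteratedDerivWithin ((n : ℕ) + 1) (ψ ∘ f) (Icc (0:ℝ) 1) p)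
    (ε : ℕ → ℝ) (hεpos : ∀ k, 0 < ε k) (hεanti : StrictAnti ε)
    (hεlim : Tendsto ε atTop (𝓝 0))
    (Mk : ℕ → (EuclideanSpace ℝ (Fin m) →L[ℝ] EuclideanSpace ℝ (Fin m)))
    (hMk : ∀ k, linW (fun i => ψ (traj i)) (ψ (f p)) (⇑(Mk k)) P (ε k)
      ≤ linW (fun i => ψ (traj i)) (ψ (f p)) (⇑M) P (ε k)) :
    Tendsto Mk atTop (𝓝 M) ∧
      ∃ C : ℝ, ∀ᶠ k in atTop, ‖Mk k - M‖ ≤ C * ε k :=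
  statement12_general m hm f ψ hfmaps hf hψ p hp P hP hinj hindep traj htrajmem htraj hdense M hM ε
    hεpos hεlim Mk hMk
end

section
/- Let m ≥ 1 and C(h) = (h, h²/2, …, h^m/m!) ∈ ℝ^m for h ∈ [−1,1], and for g : [−1,1] → ℝ^m and 0 ≤ ε ≤ 1 define δ(g, ε) := min_{‖η‖ = 1} ∫_{−ε}^{ε} ⟨η, g(h)⟩² dh. Then δ(C, 1) > 0, and for every C_Pert > 0 and every continuous Pert : [−1,1] → ℝ^m with ‖Pert(h)‖ ≤ C_Pert |h|^{m+1} on [−1,1], the curve V := C + Pert satisfies δ(V, ε) ≥ (1/2) δ(C, 1) ε^{2m+1} for all sufficiently small ε > 0. -/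
/-!
For `η ≠ 0` the function `h ↦ ⟨η, C h⟩` is a nonzero polynomial, so `∫_{-1}^{1} ⟨η, C h⟩² > 0`;
the minimum over the compact unit sphere is attained, hence `δ(C, 1) > 0`.
Substituting `h = ε t` gives `⟨η, C (ε t)⟩ = ⟨D_ε η, C t⟩` with `D_ε η = (ε^{n+1} η_n)_n`, and
`‖D_ε η‖ ≥ εᵐ ‖η‖`, so `∫_{-ε}^{ε} ⟨η, C h⟩² ≥ ε^{2m+1} δ(C, 1)` for unit `η`.
The perturbation contributes at most `2 C_Pert² ε^{2m+3}` to `∫_{-ε}^{ε} ⟨η, Pert h⟩²`, and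
`(a + b)² ≥ ¾ a² - 3 b²` makes it negligible once `24 C_Pert² ε ≤ δ(C, 1)`.
-/

open Set Filter Topology

/-- `δ(g, ε) = min_{‖η‖=1} ∫_{-ε}^{ε} ⟨η, g(h)⟩² dh`. -/
noncomputable def deltaFun {m : ℕ} (g : ℝ → EuclideanSpace ℝ (Fin m)) (ε : ℝ) : ℝ :=
  sInf {r : ℝ | ∃ η : EuclideanSpace ℝ (Fin m), ‖η‖ = 1 ∧
    r = ∫ h in (-ε)..ε, (inner ℝ η (g h) : ℝ) ^ 2}

open Polynomial intervalIntegral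

theorem Polynomial.integral_eval_sq_pos {p : ℝ[X]} (hp : p ≠ 0) {a b : ℝ} (hab : a < b) :
    0 < ∫ x in a..b, p.eval x ^ 2 := by
  obtain ⟨c, hc, hpc⟩ := ((Icc_infinite hab).sdiff (p.finite_setOfPred_isRoot hp)).nonempty
  exact integral_pos hab (p.continuous.pow 2).continuousOn (fun x _ => sq_nonneg _)
    ⟨c, hc, sq_pos_of_ne_zero hpc⟩

section DeltaFun

variable {m : ℕ} (g : ℝ → EuclideanSpace ℝ (Fin m)) {ε : ℝ}

theorem deltaFun_nonneg (hε : 0 ≤ ε) : 0 ≤ deltaFun g ε :=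
  Real.sInf_nonneg <| by
    rintro _ ⟨η, -, rfl⟩
    exact integral_nonneg (by linarith) fun _ _ => sq_nonneg _

theorem deltaFun_le (hε : 0 ≤ ε) {η : EuclideanSpace ℝ (Fin m)} (hη : ‖η‖ = 1) :
    deltaFun g ε ≤ ∫ h in (-ε)..ε, inner ℝ η (g h) ^ 2 := by
  refine csInf_le ⟨0, ?_⟩ ⟨η, hη, rfl⟩
  rintro _ ⟨η, -, rfl⟩
  exact integral_nonneg (by linarith) fun _ _ => sq_nonneg _

theorem le_deltaFun (hm : 0 < m) {c : ℝ}
    (hc : ∀ η : EuclideanSpace ℝ (Fin m), ‖η‖ = 1 → c ≤ ∫ h in (-ε)..ε, inner ℝ η (g h) ^ 2) :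
    c ≤ deltaFun g ε := by
  refine le_csInf ⟨_, EuclideanSpace.single ⟨0, hm⟩ 1, by simp, rfl⟩ ?_
  rintro _ ⟨η, hη, rfl⟩
  exact hc η hη

theorem sq_norm_mul_deltaFun_le (hε : 0 ≤ ε) (ξ : EuclideanSpace ℝ (Fin m)) :
    ‖ξ‖ ^ 2 * deltaFun g ε ≤ ∫ h in (-ε)..ε, inner ℝ ξ (g h) ^ 2 := by
  rcases eq_or_ne ξ 0 with rfl | hξ
  · simp
  set u := ‖ξ‖⁻¹ • ξ
  have hξu : ξ = ‖ξ‖ • u := by simp [u, smul_smul, norm_ne_zero_iff.mpr hξ]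
  calc ‖ξ‖ ^ 2 * deltaFun g ε
      ≤ ‖ξ‖ ^ 2 * ∫ h in (-ε)..ε, inner ℝ u (g h) ^ 2 :=
        mul_le_mul_of_nonneg_left (deltaFun_le g hε (norm_smul_inv_norm hξ)) (sq_nonneg _)
    _ = ∫ h in (-ε)..ε, inner ℝ ξ (g h) ^ 2 := by
        rw [← integral_const_mul]
        conv_rhs => rw [hξu]
        simp only [real_inner_smul_left, mul_pow]

theorem exists_deltaFun_eq_integral (hm : 0 < m) (hg : Continuous g) (ε : ℝ) :
    ∃ η : EuclideanSpace ℝ (Fin m), ‖η‖ = 1 ∧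
      deltaFun g ε = ∫ h in (-ε)..ε, inner ℝ η (g h) ^ 2 := by
  set F := fun η : EuclideanSpace ℝ (Fin m) => ∫ h in (-ε)..ε, inner ℝ η (g h) ^ 2
  have hF : Continuous F := continuous_parametric_intervalIntegral_of_continuous'
    ((continuous_fst.inner (hg.comp continuous_snd)).pow 2) _ _
  have hset :
      {r | ∃ η : EuclideanSpace ℝ (Fin m), ‖η‖ = 1 ∧ r = F η} = F '' Metric.sphere 0 1 := by
    ext r
    simp [eq_comm]
  obtain ⟨η, hη, hηF⟩ := ((isCompact_sphere 0 1).image hF).sInf_mem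
    ⟨_, EuclideanSpace.single ⟨0, hm⟩ 1, by simp, rfl⟩
  refine ⟨η, by simpa using hη, ?_⟩
  rw [deltaFun, hset, ← hηF]

end DeltaFun

section MomentCurve

variable {m : ℕ}

theorem inner_momentCurve (η : EuclideanSpace ℝ (Fin m)) (h : ℝ) :
    inner ℝ η (momentCurve m h)
      = ∑ n : Fin m, η n * (h ^ ((n : ℕ) + 1) / ((n : ℕ) + 1).factorial) := by
  simp [momentCurve, PiLp.inner_apply, mul_comm]

theorem continuous_momentCurve : Continuous (momentCurve m) :=
  (PiLp.continuous_toLp 2 _).comp (by fun_prop)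

noncomputable def momentInnerPoly (η : EuclideanSpace ℝ (Fin m)) : ℝ[X] :=
  ∑ n : Fin m, C (η n / ((n : ℕ) + 1).factorial) * X ^ ((n : ℕ) + 1)

theorem eval_momentInnerPoly (η : EuclideanSpace ℝ (Fin m)) (h : ℝ) :
    (momentInnerPoly η).eval h = inner ℝ η (momentCurve m h) := by
  simp [momentInnerPoly, inner_momentCurve, eval_finsetSum, div_mul_eq_mul_div, mul_div_assoc]

theorem coeff_momentInnerPoly (η : EuclideanSpace ℝ (Fin m)) (n : Fin m) :
    (momentInnerPoly η).coeff ((n : ℕ) + 1) = η n / ((n : ℕ) + 1).factorial := by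
  simp [momentInnerPoly, Fin.val_inj]

theorem momentInnerPoly_ne_zero {η : EuclideanSpace ℝ (Fin m)} (hη : η ≠ 0) :
    momentInnerPoly η ≠ 0 := by
  obtain ⟨n, hn⟩ : ∃ n, η n ≠ 0 := by
    by_contra! h
    exact hη (by ext i; simpa using h i)
  intro h0
  have := coeff_momentInnerPoly η n
  rw [h0, coeff_zero, eq_comm, div_eq_zero_iff] at this
  exact this.elim hn (Nat.cast_ne_zero.mpr (Nat.factorial_ne_zero _))

theorem integral_inner_momentCurve_sq_pos {η : EuclideanSpace ℝ (Fin m)} (hη : η ≠ 0) :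
    0 < ∫ h in (-1 : ℝ)..1, inner ℝ η (momentCurve m h) ^ 2 := by
  simpa only [eval_momentInnerPoly] using
    integral_eval_sq_pos (momentInnerPoly_ne_zero hη) (by norm_num)

noncomputable def momentScale (ε : ℝ) (η : EuclideanSpace ℝ (Fin m)) : EuclideanSpace ℝ (Fin m) :=
  WithLp.toLp 2 fun n => ε ^ ((n : ℕ) + 1) * η n

theorem inner_momentCurve_mul (ε : ℝ) (η : EuclideanSpace ℝ (Fin m)) (t : ℝ) :
    inner ℝ η (momentCurve m (ε * t)) = inner ℝ (momentScale ε η) (momentCurve m t) := by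
  simp only [inner_momentCurve, momentScale, mul_pow]
  exact Finset.sum_congr rfl fun n _ => by ring

theorem pow_mul_norm_le_norm_momentScale {ε : ℝ} (hε₀ : 0 ≤ ε) (hε₁ : ε ≤ 1)
    (η : EuclideanSpace ℝ (Fin m)) : ε ^ m * ‖η‖ ≤ ‖momentScale ε η‖ := by
  refine le_of_pow_le_pow_left₀ two_ne_zero (norm_nonneg _) ?_
  rw [mul_pow, EuclideanSpace.real_norm_sq_eq, EuclideanSpace.real_norm_sq_eq, Finset.mul_sum]
  refine Finset.sum_le_sum fun n _ => ?_
  rw [momentScale, PiLp.toLp_apply, mul_pow]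
  exact mul_le_mul_of_nonneg_right
    (pow_le_pow_left₀ (by positivity) (pow_le_pow_of_le_one hε₀ hε₁ n.isLt) 2) (sq_nonneg _)

theorem deltaFun_momentCurve_one_pos (hm : 0 < m) : 0 < deltaFun (momentCurve m) 1 := by
  obtain ⟨η, hη, hδ⟩ := exists_deltaFun_eq_integral _ hm continuous_momentCurve 1
  rw [hδ]
  exact integral_inner_momentCurve_sq_pos (by rintro rfl; simp at hη)

theorem pow_mul_sq_norm_mul_deltaFun_momentCurve_le {ε : ℝ} (hε₀ : 0 ≤ ε) (hε₁ : ε ≤ 1)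
    (η : EuclideanSpace ℝ (Fin m)) :
    ε ^ (2 * m + 1) * ‖η‖ ^ 2 * deltaFun (momentCurve m) 1
      ≤ ∫ h in (-ε)..ε, inner ℝ η (momentCurve m h) ^ 2 := by
  have hδ := deltaFun_nonneg (momentCurve m) zero_le_one
  calc ε ^ (2 * m + 1) * ‖η‖ ^ 2 * deltaFun (momentCurve m) 1
      = ε * ((ε ^ m * ‖η‖) ^ 2 * deltaFun (momentCurve m) 1) := by ring
    _ ≤ ε * (‖momentScale ε η‖ ^ 2 * deltaFun (momentCurve m) 1) := by
        gcongr
        exact pow_mul_norm_le_norm_momentScale hε₀ hε₁ η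
    _ ≤ ε * ∫ t in (-1 : ℝ)..1, inner ℝ (momentScale ε η) (momentCurve m t) ^ 2 := by
        gcongr
        exact sq_norm_mul_deltaFun_le _ zero_le_one _
    _ = ∫ h in (-ε)..ε, inner ℝ η (momentCurve m h) ^ 2 := by
        simp_rw [← inner_momentCurve_mul]
        rw [mul_integral_comp_mul_left (f := fun h => inner ℝ η (momentCurve m h) ^ 2)]
        simp

end MomentCurve

theorem integral_inner_sq_le_of_norm_le {E : Type*} [NormedAddCommGroup E] [InnerProductSpace ℝ E]
    {P : ℝ → E} {η : E} (hη : ‖η‖ ≤ 1) {C ε : ℝ} {k : ℕ} (hε : 0 ≤ ε)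
    (hP : ∀ x ∈ Icc (-ε) ε, ‖P x‖ ≤ C * |x| ^ k) :
    ∫ x in (-ε)..ε, inner ℝ η (P x) ^ 2 ≤ 2 * C ^ 2 * ε ^ (2 * k + 1) := by
  have hpt : ∀ x ∈ uIoc (-ε) ε, ‖inner ℝ η (P x) ^ 2‖ ≤ C ^ 2 * ε ^ (2 * k) := by
    intro x hx
    rw [uIoc_of_le (by linarith)] at hx
    have hinner : |inner ℝ η (P x)| ≤ C * |x| ^ k :=
      (abs_real_inner_le_norm _ _).trans <|
        (mul_le_of_le_one_left (norm_nonneg _) hη).trans (hP x (Ioc_subset_Icc_self hx))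
    calc ‖inner ℝ η (P x) ^ 2‖ = |inner ℝ η (P x)| ^ 2 := by rw [Real.norm_eq_abs, abs_pow, sq_abs]
      _ ≤ C ^ 2 * (|x| ^ k) ^ 2 := by
          rw [← mul_pow]
          exact pow_le_pow_left₀ (abs_nonneg _) hinner 2
      _ ≤ C ^ 2 * (ε ^ k) ^ 2 := by
          gcongr
          exact abs_le.mpr ⟨hx.1.le, hx.2⟩
      _ = C ^ 2 * ε ^ (2 * k) := by ring
  calc ∫ x in (-ε)..ε, inner ℝ η (P x) ^ 2
      ≤ ‖∫ x in (-ε)..ε, inner ℝ η (P x) ^ 2‖ := Real.le_norm_self _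
    _ ≤ C ^ 2 * ε ^ (2 * k) * |ε - -ε| := norm_integral_le_of_norm_le_const hpt
    _ = 2 * C ^ 2 * ε ^ (2 * k + 1) := by
        rw [abs_of_nonneg (by linarith)]
        ring

theorem le_integral_add_sq {f g : ℝ → ℝ} {a b : ℝ} (hab : a ≤ b)
    (hf : ContinuousOn f (uIcc a b)) (hg : ContinuousOn g (uIcc a b)) :
    3 / 4 * (∫ x in a..b, f x ^ 2) - 3 * ∫ x in a..b, g x ^ 2 ≤ ∫ x in a..b, (f x + g x) ^ 2 := by
  have hf2 : IntervalIntegrable (fun x => 3 / 4 * f x ^ 2) MeasureTheory.volume a b :=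
    (hf.pow 2).intervalIntegrable.const_mul _
  have hg2 : IntervalIntegrable (fun x => 3 * g x ^ 2) MeasureTheory.volume a b :=
    (hg.pow 2).intervalIntegrable.const_mul _
  rw [← integral_const_mul, ← integral_const_mul, ← integral_sub hf2 hg2]
  refine integral_mono_on hab (hf2.sub hg2) ((hf.add hg).pow 2).intervalIntegrable fun x _ => ?_
  -- the difference is `(f x / 2 + 2 * g x) ^ 2`
  nlinarith [sq_nonneg (f x / 2 + 2 * g x)]

/-- **Lemmas JJ19 and JJ20.** For the curve `C(h) = (h, h²/2, …, hᵐ/m!)` one has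
`δ(C, 1) > 0`; and if `V = C + Pert` with `Pert` continuous and
`‖Pert h‖ ≤ C_Pert |h|^{m+1}` on `[-1, 1]`, then
`δ(V, ε) ≥ ½ δ(C, 1) ε^{2m+1}` for all sufficiently small `ε > 0`. -/
theorem statement15 (m : ℕ) (hm : 1 ≤ m) :
    0 < deltaFun (momentCurve m) 1 ∧
    ∀ CPert > (0:ℝ), ∀ Pert : ℝ → EuclideanSpace ℝ (Fin m),
      ContinuousOn Pert (Icc (-1) 1) →
      (∀ h ∈ Icc (-1:ℝ) 1, ‖Pert h‖ ≤ CPert * |h| ^ (m + 1)) →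
      ∃ ε' > (0:ℝ), ∀ ε : ℝ, 0 < ε → ε ≤ ε' →
        (1 / 2) * deltaFun (momentCurve m) 1 * ε ^ (2 * m + 1)
          ≤ deltaFun (fun h => momentCurve m h + Pert h) ε := by
  set δ := deltaFun (momentCurve m) 1
  have hδ : 0 < δ := deltaFun_momentCurve_one_pos hm
  refine ⟨hδ, fun CPert hC Pert hPc hPb =>
    ⟨min 1 (δ / (24 * CPert ^ 2)), by positivity, fun ε hε₀ hε => ?_⟩⟩
  have hε₁ : ε ≤ 1 := hε.trans (min_le_left _ _)
  have hεδ : 24 * CPert ^ 2 * ε ≤ δ :=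
    (le_div_iff₀' (by positivity)).mp (hε.trans (min_le_right _ _))
  have hIcc : uIcc (-ε) ε ⊆ Icc (-1) 1 := by
    rw [uIcc_of_le (by linarith)]
    exact Icc_subset_Icc (neg_le_neg hε₁) hε₁
  refine le_deltaFun _ hm fun η hη => ?_
  have hcurve : ε ^ (2 * m + 1) * δ ≤ ∫ h in (-ε)..ε, inner ℝ η (momentCurve m h) ^ 2 := by
    simpa [hη] using pow_mul_sq_norm_mul_deltaFun_momentCurve_le hε₀.le hε₁ η
  have hpert := integral_inner_sq_le_of_norm_le hη.le hε₀.le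
    fun x hx => hPb x (hIcc (Icc_subset_uIcc hx))
  have hsplit := le_integral_add_sq (f := fun h => inner ℝ η (momentCurve m h))
    (g := fun h => inner ℝ η (Pert h)) (by linarith)
    (continuous_const.inner continuous_momentCurve).continuousOn
    (continuousOn_const.inner (hPc.mono hIcc))
  simp_rw [inner_add_right]
  have hsmall : 24 * CPert ^ 2 * ε ^ 2 * ε ^ (2 * m + 1) ≤ δ * ε ^ (2 * m + 1) := by
    gcongr
    nlinarith
  calc 1 / 2 * δ * ε ^ (2 * m + 1)
      ≤ 3 / 4 * (ε ^ (2 * m + 1) * δ) - 3 * (2 * CPert ^ 2 * ε ^ (2 * (m + 1) + 1)) := by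
        rw [show ε ^ (2 * (m + 1) + 1) = ε ^ 2 * ε ^ (2 * m + 1) by ring]
        linarith
    _ ≤ _ := by linarith
    _ ≤ _ := hsplit
end

section
/- Let m ≥ 1, let π : [0,1] → ℝ^m be C^{m+1}, and let p ∈ (0,1) with P = π(p) be such that the derivative vectors π^{(1)}(p), …, π^{(m)}(p) are linearly independent in ℝ^m. Then there exist constants C₁ > 0 and ε' > 0, independent of ε, such that for all 0 < ε < ε', min_{‖η‖ = 1} ∫_{p−ε}^{p+ε} ⟨η, π(x) − P⟩² dx ≥ C₁ ε^{2m+1}. -/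
/-!
By Taylor's theorem at `p`, `⟪η, ψ x - P⟫ = Q_η (x - p) + O((x - p) ^ (m + 1))` with
`Q_η u = ∑_{k=1}^m ⟪η, ψ⁽ᵏ⁾(p) / k!⟫ uᵏ`, so on `[p, p + ε]` the integral of `⟪η, ψ x - P⟫²` is at
least `½ ∫₀^ε Q_η²` up to an `O(ε^(2m+3))` error. Substituting `u = ε t` gives
`∫₀^ε Q_η² = ε ∫₀¹ (∑ bₖ tᵏ)²` with `bₖ = εᵏ ⟪η, ψ⁽ᵏ⁾(p) / k!⟫`. The quadratic form
`b ↦ ∫₀¹ (∑ bₖ tᵏ)²` is positive definite (a nonzero polynomial has finitely many roots), and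
`η ↦ ∑ₖ ⟪η, ψ⁽ᵏ⁾(p) / k!⟫²` is positive definite because the derivatives span `ℝᵐ`; by compactness
of unit spheres both are bounded below by multiples of the squared norm, whence
`∫₀^ε Q_η² ≳ ε · ε^(2m) ‖η‖²`. The error term is absorbed for small `ε`.
-/

open Set Filter Topology MeasureTheory
open scoped Nat

theorem exists_pos_mul_norm_sq_le_of_homogeneous {E : Type*} [NormedAddCommGroup E]
    [NormedSpace ℝ E] [FiniteDimensional ℝ E] {F : E → ℝ} (hF : Continuous F)
    (hsmul : ∀ (c : ℝ) (x : E), F (c • x) = c ^ 2 * F x) (hpos : ∀ x ≠ 0, 0 < F x) :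
    ∃ κ > 0, ∀ x, κ * ‖x‖ ^ 2 ≤ F x := by
  have hF0 : F 0 = 0 := by simpa using hsmul 0 0
  rcases subsingleton_or_nontrivial E with hE | hE
  · exact ⟨1, one_pos, fun x => by simp [Subsingleton.elim x 0, hF0]⟩
  obtain ⟨x₀, hx₀, hmin⟩ := (isCompact_sphere (0 : E) 1).exists_isMinOn
    (NormedSpace.sphere_nonempty.mpr zero_le_one) hF.continuousOn
  refine ⟨F x₀, hpos x₀ (ne_zero_of_mem_unit_sphere ⟨x₀, hx₀⟩), fun x => ?_⟩
  rcases eq_or_ne x 0 with rfl | hx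
  · simp [hF0]
  have hu : ‖x‖⁻¹ • x ∈ Metric.sphere (0 : E) 1 :=
    mem_sphere_zero_iff_norm.mpr (norm_smul_inv_norm hx)
  calc F x₀ * ‖x‖ ^ 2 ≤ F (‖x‖⁻¹ • x) * ‖x‖ ^ 2 := by gcongr; exact hmin hu
    _ = F x := by rw [hsmul]; field_simp

theorem exists_pos_mul_norm_sq_le_sum_inner_sq {E ι : Type*} [NormedAddCommGroup E]
    [InnerProductSpace ℝ E] [FiniteDimensional ℝ E] [Fintype ι] {v : ι → E}
    (hv : Submodule.span ℝ (range v) = ⊤) :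
    ∃ κ > 0, ∀ η : E, κ * ‖η‖ ^ 2 ≤ ∑ i, inner ℝ η (v i) ^ 2 := by
  refine exists_pos_mul_norm_sq_le_of_homogeneous (by fun_prop)
    (fun c x => by simp only [real_inner_smul_left, mul_pow, Finset.mul_sum]) fun η hη => ?_
  refine lt_of_le_of_ne (by positivity) fun h => hη ?_
  have horth : ∀ i, inner ℝ η (v i) = 0 := fun i => by
    simpa using (Finset.sum_eq_zero_iff_of_nonneg fun i _ => sq_nonneg _).mp h.symm i
  have hker : η ∈ LinearMap.ker (innerₛₗ ℝ η) :=
    Submodule.span_le.mpr (by rintro _ ⟨i, rfl⟩; exact horth i) (hv ▸ Submodule.mem_top)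
  simpa using hker

theorem Polynomial.integral_sq_eval_pos {q : Polynomial ℝ} (hq : q ≠ 0) {a b : ℝ}
    (hab : a < b) : 0 < ∫ t in a..b, q.eval t ^ 2 := by
  rw [intervalIntegral.integral_pos_iff_support_of_nonneg_ae
    (Eventually.of_forall fun t => sq_nonneg _)
    ((by fun_prop : Continuous fun t => q.eval t ^ 2).intervalIntegrable a b)]
  refine ⟨hab, ?_⟩
  have hroots : volume {t | q.IsRoot t} = 0 :=
    (Polynomial.finite_setOfPred_isRoot hq).measure_zero _
  calc 0 < volume (Ioc a b) := by simp [hab]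
    _ = volume (Ioc a b \ {t | q.IsRoot t}) := (measure_sdiff_null hroots).symm
    _ ≤ volume (Function.support (fun t => q.eval t ^ 2) ∩ Ioc a b) :=
      measure_mono fun t ht => ⟨by simpa using ht.2, ht.1⟩

theorem exists_pos_mul_norm_sq_le_integral_sq (m : ℕ) :
    ∃ κ > 0, ∀ b : EuclideanSpace ℝ (Fin m),
      κ * ‖b‖ ^ 2 ≤ ∫ t in (0 : ℝ)..1, (∑ i, b i * t ^ ((i : ℕ) + 1)) ^ 2 := by
  refine exists_pos_mul_norm_sq_le_of_homogeneous
    (intervalIntegral.continuous_parametric_intervalIntegral_of_continuous' (by fun_prop) _ _)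
    (fun c b => ?_) fun b hb => ?_
  · simp only [PiLp.smul_apply, smul_eq_mul, mul_assoc, ← Finset.mul_sum, mul_pow,
      intervalIntegral.integral_const_mul]
  · obtain ⟨i, hi⟩ : ∃ i : Fin m, b i ≠ 0 := by
      by_contra! h
      exact hb (by ext i; simp [h i])
    let q : Polynomial ℝ := ∑ j : Fin m, Polynomial.monomial ((j : ℕ) + 1) (b j)
    have hq : q.coeff ((i : ℕ) + 1) ≠ 0 := by
      simpa [q, Polynomial.finsetSum_coeff, Polynomial.coeff_monomial, Fin.val_inj] using hi
    simpa [q, Polynomial.eval_finsetSum] using Polynomial.integral_sq_eval_pos (q := q)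
      (fun h => hq (by rw [h, Polynomial.coeff_zero])) zero_lt_one

theorem exists_pos_mul_pow_mul_sum_sq_le_integral_sq (m : ℕ) :
    ∃ κ > 0, ∀ (c : Fin m → ℝ) (ε : ℝ), 0 < ε → ε ≤ 1 →
      κ * ε ^ (2 * m + 1) * ∑ i, c i ^ 2
        ≤ ∫ u in (0 : ℝ)..ε, (∑ i, c i * u ^ ((i : ℕ) + 1)) ^ 2 := by
  obtain ⟨κ, hκ, hG⟩ := exists_pos_mul_norm_sq_le_integral_sq m
  refine ⟨κ, hκ, fun c ε hε hε1 => ?_⟩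
  let b : EuclideanSpace ℝ (Fin m) := WithLp.toLp 2 fun i => c i * ε ^ ((i : ℕ) + 1)
  have hscale : ∫ u in (0 : ℝ)..ε, (∑ i, c i * u ^ ((i : ℕ) + 1)) ^ 2
      = ε * ∫ t in (0 : ℝ)..1, (∑ i, b i * t ^ ((i : ℕ) + 1)) ^ 2 := by
    have h := intervalIntegral.smul_integral_comp_mul_left
      (fun u => (∑ i, c i * u ^ ((i : ℕ) + 1)) ^ 2) ε (a := 0) (b := 1)
    rw [mul_zero, mul_one, smul_eq_mul] at h
    simp only [← h, b, mul_pow, mul_assoc]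
  have hb : ε ^ (2 * m) * ∑ i, c i ^ 2 ≤ ‖b‖ ^ 2 := by
    rw [EuclideanSpace.real_norm_sq_eq, Finset.mul_sum]
    refine Finset.sum_le_sum fun i _ => ?_
    rw [mul_pow, ← pow_mul, mul_comm]
    have hi := i.isLt
    exact mul_le_mul_of_nonneg_left (pow_le_pow_of_le_one hε.le hε1 (by omega)) (sq_nonneg _)
  calc κ * ε ^ (2 * m + 1) * ∑ i, c i ^ 2 = ε * (κ * (ε ^ (2 * m) * ∑ i, c i ^ 2)) := by ring
    _ ≤ ε * (κ * ‖b‖ ^ 2) := by gcongr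
    _ ≤ _ := by rw [hscale]; gcongr; exact hG b

theorem iteratedDerivWithin_subset {𝕜 F : Type*} [NontriviallyNormedField 𝕜]
    [NormedAddCommGroup F] [NormedSpace 𝕜 F] {f : 𝕜 → F} {s t : Set 𝕜} {n : ℕ} {x : 𝕜}
    (hst : s ⊆ t) (hs : UniqueDiffOn 𝕜 s) (ht : UniqueDiffOn 𝕜 t) (hf : ContDiffOn 𝕜 n f t)
    (hx : x ∈ s) : iteratedDerivWithin n f s x = iteratedDerivWithin n f t x := by
  simp only [iteratedDerivWithin_eq_iteratedFDerivWithin,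
    iteratedFDerivWithin_subset hst hs ht hf hx]

theorem norm_sub_sum_taylorCoeffWithin_le {E : Type*} [NormedAddCommGroup E]
    [NormedSpace ℝ E] {f : ℝ → E} {s : Set ℝ} {n : ℕ} {a b C x : ℝ} (hs : UniqueDiffOn ℝ s)
    (hab : a < b) (hsub : Icc a b ⊆ s) (hf : ContDiffOn ℝ (n + 1) f s)
    (hC : ∀ y ∈ Icc a b, ‖iteratedDerivWithin (n + 1) f s y‖ ≤ C) (hx : x ∈ Icc a b) :
    ‖f x - f a - ∑ i : Fin n, (x - a) ^ ((i : ℕ) + 1) • taylorCoeffWithin f ((i : ℕ) + 1) s a‖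
      ≤ C * (x - a) ^ (n + 1) / n ! := by
  have hderiv : ∀ k ≤ n + 1, ∀ y ∈ Icc a b,
      iteratedDerivWithin k f (Icc a b) y = iteratedDerivWithin k f s y := fun k hk y hy =>
    iteratedDerivWithin_subset hsub (uniqueDiffOn_Icc hab) hs (hf.of_le (by exact_mod_cast hk)) hy
  have hT := taylor_mean_remainder_bound hab.le (hf.mono hsub) hx
    fun y hy => hderiv (n + 1) le_rfl y hy ▸ hC y hy
  rw [sub_sub]
  convert hT using 2
  rw [taylor_within_apply, Finset.sum_range_succ', Finset.sum_range]
  simp only [Nat.factorial_zero, Nat.cast_one, inv_one, pow_zero, mul_one, one_smul,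
    iteratedDerivWithin_zero, add_comm (f a)]
  congr 2
  refine Finset.sum_congr rfl fun i _ => ?_
  rw [taylorCoeffWithin, smul_smul, mul_comm, hderiv _ (by omega) a (left_mem_Icc.mpr hab.le)]

theorem half_integral_sq_sub_integral_sq_le {f g h : ℝ → ℝ} {a b : ℝ} (hab : a ≤ b)
    (hf : ContinuousOn f (Icc a b)) (hg : ContinuousOn g (Icc a b))
    (hh : ContinuousOn h (Icc a b)) (hfg : ∀ x ∈ Icc a b, |f x - g x| ≤ h x) :
    (∫ x in a..b, g x ^ 2) / 2 - ∫ x in a..b, h x ^ 2 ≤ ∫ x in a..b, f x ^ 2 := by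
  rw [← uIcc_of_le hab] at hf hg hh
  rw [← intervalIntegral.integral_div, ← intervalIntegral.integral_sub
    (ContinuousOn.intervalIntegrable (by fun_prop)) (ContinuousOn.intervalIntegrable (by fun_prop))]
  refine intervalIntegral.integral_mono_on hab (ContinuousOn.intervalIntegrable (by fun_prop))
    (ContinuousOn.intervalIntegrable (by fun_prop)) fun x hx => ?_
  obtain ⟨hlo, hhi⟩ := abs_le.mp (hfg x hx)
  have hsq : (f x - g x) ^ 2 ≤ h x ^ 2 := sq_le_sq' hlo hhi
  -- `g² ≤ 2 f² + 2 (f - g)²`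
  nlinarith [sq_nonneg (2 * f x - g x)]

theorem half_integral_sq_sub_le_integral_inner_sub_sq {E : Type*} [NormedAddCommGroup E]
    [InnerProductSpace ℝ E] {ψ : ℝ → E} {s : Set ℝ} {n : ℕ} {a ε C : ℝ}
    (hs : UniqueDiffOn ℝ s) (hε : 0 < ε) (hsub : Icc a (a + ε) ⊆ s)
    (hψ : ContDiffOn ℝ (n + 1) ψ s)
    (hC : ∀ y ∈ Icc a (a + ε), ‖iteratedDerivWithin (n + 1) ψ s y‖ ≤ C) {η : E} (hη : ‖η‖ ≤ 1) :
    (∫ u in (0 : ℝ)..ε, (∑ i : Fin n,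
        inner ℝ η (taylorCoeffWithin ψ ((i : ℕ) + 1) s a) * u ^ ((i : ℕ) + 1)) ^ 2) / 2
      - (C / n !) ^ 2 * ε ^ (2 * n + 3)
      ≤ ∫ x in a..a + ε, inner ℝ η (ψ x - ψ a) ^ 2 := by
  set Q : ℝ → ℝ := fun u =>
    ∑ i : Fin n, inner ℝ η (taylorCoeffWithin ψ ((i : ℕ) + 1) s a) * u ^ ((i : ℕ) + 1)
  have hab : a < a + ε := by linarith
  have hrem : ∀ x ∈ Icc a (a + ε),
      |inner ℝ η (ψ x - ψ a) - Q (x - a)| ≤ C / n ! * (x - a) ^ (n + 1) := by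
    intro x hx
    set T := ∑ i : Fin n, (x - a) ^ ((i : ℕ) + 1) • taylorCoeffWithin ψ ((i : ℕ) + 1) s a
    have hQ : Q (x - a) = inner ℝ η T := by
      simp only [Q, T, inner_sum, real_inner_smul_right, mul_comm]
    calc |inner ℝ η (ψ x - ψ a) - Q (x - a)| ≤ ‖η‖ * ‖ψ x - ψ a - T‖ := by
          rw [hQ, ← inner_sub_right]; exact abs_real_inner_le_norm _ _
      _ ≤ 1 * (C * (x - a) ^ (n + 1) / n !) := by
          gcongr
          exact norm_sub_sum_taylorCoeffWithin_le hs hab hsub hψ hC hx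
      _ = C / n ! * (x - a) ^ (n + 1) := by ring
  have hψc : ContinuousOn ψ (Icc a (a + ε)) := hψ.continuousOn.mono hsub
  have hcomp := half_integral_sq_sub_integral_sq_le hab.le
    (by fun_prop) (by fun_prop) (by fun_prop) hrem
  have hQ : ∫ x in a..a + ε, Q (x - a) ^ 2 = ∫ u in (0 : ℝ)..ε, Q u ^ 2 := by
    rw [intervalIntegral.integral_comp_sub_right (fun u => Q u ^ 2), sub_self, add_sub_cancel_left]
  have hrem_int : ∫ x in a..a + ε, (C / n ! * (x - a) ^ (n + 1)) ^ 2
      ≤ (C / n !) ^ 2 * ε ^ (2 * n + 3) := by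
    simp_rw [mul_pow, ← pow_mul]
    rw [intervalIntegral.integral_comp_sub_right (fun u => (C / n !) ^ 2 * u ^ ((n + 1) * 2)),
      sub_self, add_sub_cancel_left, intervalIntegral.integral_const_mul, integral_pow,
      zero_pow (by omega), sub_zero, show (n + 1) * 2 + 1 = 2 * n + 3 by ring]
    gcongr
    exact div_le_self (by positivity) (by norm_cast; omega)
  linarith

theorem exists_pos_pow_sub_le_integral_inner_sub_sq {E : Type*} [NormedAddCommGroup E]
    [InnerProductSpace ℝ E] [FiniteDimensional ℝ E] {ψ : ℝ → E} {s : Set ℝ} {n : ℕ} {a C : ℝ}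
    (hs : UniqueDiffOn ℝ s) (hψ : ContDiffOn ℝ (n + 1) ψ s)
    (hC : ∀ y ∈ s, ‖iteratedDerivWithin (n + 1) ψ s y‖ ≤ C) (hdim : Module.finrank ℝ E = n)
    (hindep : LinearIndependent ℝ fun i : Fin n => iteratedDerivWithin ((i : ℕ) + 1) ψ s a) :
    ∃ κ > 0, ∀ ε, 0 < ε → ε ≤ 1 → Icc a (a + ε) ⊆ s → ∀ η : E, ‖η‖ = 1 →
      κ * ε ^ (2 * n + 1) - (C / n !) ^ 2 * ε ^ (2 * n + 3)
        ≤ ∫ x in a..a + ε, inner ℝ η (ψ x - ψ a) ^ 2 := by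
  have hw : LinearIndependent ℝ fun i : Fin n => taylorCoeffWithin ψ ((i : ℕ) + 1) s a :=
    hindep.units_smul fun i => Units.mk0 _ (by positivity)
  obtain ⟨κ₁, hκ₁, hpoly⟩ := exists_pos_mul_pow_mul_sum_sq_le_integral_sq n
  obtain ⟨κ₂, hκ₂, hcoef⟩ :=
    exists_pos_mul_norm_sq_le_sum_inner_sq (hw.span_eq_top_of_card_eq_finrank' (by simp [hdim]))
  refine ⟨κ₁ * κ₂ / 2, by positivity, fun ε hε hε1 hsub η hη => ?_⟩
  have hlow := hpoly (fun i => inner ℝ η (taylorCoeffWithin ψ ((i : ℕ) + 1) s a)) ε hε hε1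
  beta_reduce at hlow
  have hκ : κ₁ * ε ^ (2 * n + 1) * κ₂ ≤ κ₁ * ε ^ (2 * n + 1) *
      ∑ i : Fin n, inner ℝ η (taylorCoeffWithin ψ ((i : ℕ) + 1) s a) ^ 2 := by
    gcongr
    simpa [hη] using hcoef η
  have := half_integral_sq_sub_le_integral_inner_sub_sq hs hε hsub hψ
    (fun y hy => hC y (hsub hy)) hη.le
  linarith

theorem statement16_general (m : ℕ)
    (ψ : ℝ → EuclideanSpace ℝ (Fin m))
    (hψ : ContDiffOn ℝ (m + 1) ψ (Icc (0:ℝ) 1))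
    (p : ℝ) (hp : p ∈ Ioo (0:ℝ) 1)
    (P : EuclideanSpace ℝ (Fin m)) (hP : P = ψ p)
    (hindep : LinearIndependent ℝ
      (fun n : Fin m => iteratedDerivWithin ((n : ℕ) + 1) ψ (Icc (0:ℝ) 1) p)) :
    ∃ C₁ > (0:ℝ), ∃ ε' > (0:ℝ), ∀ ε : ℝ, 0 < ε → ε < ε' →
      ∀ η : EuclideanSpace ℝ (Fin m), ‖η‖ = 1 →
        C₁ * ε ^ (2 * m + 1) ≤ ∫ x in (p - ε)..(p + ε), (inner ℝ η (ψ x - P) : ℝ) ^ 2 := by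
  obtain ⟨C, hC⟩ := isCompact_Icc.exists_bound_of_continuousOn
    (hψ.continuousOn_iteratedDerivWithin (m := m + 1) (by norm_cast) (uniqueDiffOn_Icc one_pos))
  obtain ⟨κ, hκ, hright⟩ := exists_pos_pow_sub_le_integral_inner_sub_sq
    (uniqueDiffOn_Icc one_pos) hψ hC finrank_euclideanSpace_fin hindep
  set R := (C / m !) ^ 2
  refine ⟨κ / 2, by positivity, min (min p (1 - p)) (min 1 (κ / (2 * (R + 1)))),
    lt_min (lt_min hp.1 (by linarith [hp.2])) (lt_min one_pos (by positivity)),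
    fun ε hε hε' η hη => ?_⟩
  obtain ⟨⟨hεp, hεp'⟩, hε1, hεR⟩ := by simpa only [lt_min_iff] using hε'
  have hsub : Icc (p - ε) (p + ε) ⊆ Icc 0 1 := Icc_subset_Icc (by linarith) (by linarith)
  have hψc : ContinuousOn ψ (uIcc (p - ε) (p + ε)) :=
    hψ.continuousOn.mono (by rwa [uIcc_of_le (by linarith)])
  have hleft : ∫ x in p..p + ε, inner ℝ η (ψ x - ψ p) ^ 2
      ≤ ∫ x in p - ε..p + ε, inner ℝ η (ψ x - ψ p) ^ 2 :=
    intervalIntegral.integral_mono_interval (by linarith) (by linarith) le_rfl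
      (Eventually.of_forall fun x => sq_nonneg _) (ContinuousOn.intervalIntegrable (by fun_prop))
  have hRε : R * ε ^ 2 ≤ κ / 2 := by
    rw [lt_div_iff₀ (by positivity)] at hεR
    nlinarith [sq_nonneg (C / m !)]
  subst hP
  calc κ / 2 * ε ^ (2 * m + 1) ≤ κ * ε ^ (2 * m + 1) - R * ε ^ (2 * m + 3) := by
        rw [show ε ^ (2 * m + 3) = ε ^ 2 * ε ^ (2 * m + 1) by ring]
        nlinarith [pow_pos hε (2 * m + 1)]
    _ ≤ _ := hright ε hε hε1.le ((Icc_subset_Icc_left (by linarith)).trans hsub) η hη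
    _ ≤ _ := hleft

/-- **Lemma JJ21.** If `ψ : [0,1] → ℝᵐ` is `C^{m+1}` and the derivative vectors
`ψ⁽¹⁾(p), …, ψ⁽ᵐ⁾(p)` are linearly independent at an interior point `p`, then there is a
constant `C₁ > 0` such that for all sufficiently small `ε > 0` and every unit vector `η`,
`∫_{p-ε}^{p+ε} ⟨η, ψ(x) − P⟩² dx ≥ C₁ ε^{2m+1}`. -/
theorem statement16 (m : ℕ) (hm : 1 ≤ m)
    (ψ : ℝ → EuclideanSpace ℝ (Fin m))
    (hψ : ContDiffOn ℝ (m + 1) ψ (Icc (0:ℝ) 1))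
    (p : ℝ) (hp : p ∈ Ioo (0:ℝ) 1)
    (P : EuclideanSpace ℝ (Fin m)) (hP : P = ψ p)
    (hindep : LinearIndependent ℝ
      (fun n : Fin m => iteratedDerivWithin ((n : ℕ) + 1) ψ (Icc (0:ℝ) 1) p)) :
    ∃ C₁ > (0:ℝ), ∃ ε' > (0:ℝ), ∀ ε : ℝ, 0 < ε → ε < ε' →
      ∀ η : EuclideanSpace ℝ (Fin m), ‖η‖ = 1 →
        C₁ * ε ^ (2 * m + 1) ≤ ∫ x in (p - ε)..(p + ε), (inner ℝ η (ψ x - P) : ℝ) ^ 2 :=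
  statement16_general m ψ hψ p hp P hP hindep
end

section
/- Let p(x, y) be a real polynomial in two variables of total degree at most d (every monomial in p has total degree at most d). Suppose there exist a constant C > 0, an exponent q > d, and a sequence of points (x_k, y_k) → (0,0) in ℝ², with (x_k, y_k) ≠ (0,0), such that |p(x_k, y_k)| ≤ C ‖(x_k, y_k)‖^q for all k. If the set {(x_k, y_k) : k ≥ 0} has d + 1 distinct approach directions at (0,0), then p(x, y) = 0 for all (x, y) ∈ ℝ². -/
/-!
Write `p` as the sum of its homogeneous components `pₘ` and show by strong induction that they all
vanish. If the components below degree `m ≤ d` vanish and `Q k → 0` with directions tending to `l`,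
then `p (Q k) / ‖Q k‖ ^ m → pₘ l`, while `|p (Q k)| ≤ C ‖Q k‖ ^ q` with `q > m` forces this
quotient to tend to `0`. So the binary form `pₘ` of degree `m` vanishes at `d + 1 > m` pairwise
non-proportional vectors, and is therefore zero: in an affine chart of the projective line that
contains all of them it becomes a one-variable polynomial of degree `≤ m` with `d + 1` roots.
-/

open Filter Topology

namespace MvPolynomial

theorem IsHomogeneous.eval_smul {σ R : Type*} [CommSemiring R] {P : MvPolynomial σ R} {m : ℕ}
    (hP : P.IsHomogeneous m) (c : R) (v : σ → R) :
    eval (c • v) P = c ^ m * eval v P := by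
  rw [P.as_sum, map_sum, map_sum, Finset.mul_sum]
  refine Finset.sum_congr rfl fun d hd => ?_
  rw [eval_monomial, eval_monomial, ← hP (mem_support_iff.mp hd), Finsupp.weight_apply]
  simp [Finsupp.prod, Finsupp.sum, mul_pow, Finset.prod_mul_distrib, Finset.prod_pow_eq_pow_sum]
  ring

theorem eq_zero_of_forall_homogeneousComponent_eq_zero {σ R : Type*} [CommSemiring R]
    {p : MvPolynomial σ R}
    (h : ∀ m, (∀ j < m, homogeneousComponent j p = 0) → homogeneousComponent m p = 0) :
    p = 0 := by
  have hall (m : ℕ) : homogeneousComponent m p = 0 := Nat.strong_induction_on m h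
  rw [← sum_homogeneousComponent p]
  exact Finset.sum_eq_zero fun m _ => hall m

theorem tendsto_eval_smul_div_pow {σ 𝕜 α : Type*} [Field 𝕜] [TopologicalSpace 𝕜]
    [IsTopologicalRing 𝕜] {p : MvPolynomial σ 𝕜} {m : ℕ}
    (hlow : ∀ j < m, homogeneousComponent j p = 0) {F : Filter α} {r : α → 𝕜}
    {u : α → σ → 𝕜} {l : σ → 𝕜} (hr0 : ∀ k, r k ≠ 0) (hr : Tendsto r F (𝓝 0))
    (hu : Tendsto u F (𝓝 l)) :
    Tendsto (fun k => eval (r k • u k) p / r k ^ m) F (𝓝 (eval l (homogeneousComponent m p))) := by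
  set N := p.totalDegree
  have hterm (k : α) (j : ℕ) : eval (r k • u k) (homogeneousComponent j p) / r k ^ m =
      r k ^ (j - m) * eval (u k) (homogeneousComponent j p) := by
    rcases lt_or_ge j m with hj | hj
    · simp [hlow j hj]
    · rw [(homogeneousComponent_isHomogeneous j p).eval_smul, ← pow_sub_mul_pow _ hj]
      field_simp [hr0 k]
  have hsplit (k : α) : eval (r k • u k) p / r k ^ m =
      ∑ j ∈ Finset.range (N + 1), r k ^ (j - m) * eval (u k) (homogeneousComponent j p) := by
    conv_lhs => rw [← sum_homogeneousComponent p]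
    rw [map_sum, Finset.sum_div]
    exact Finset.sum_congr rfl fun j _ => hterm k j
  have hlim : ∑ j ∈ Finset.range (N + 1), (0 : 𝕜) ^ (j - m) * eval l (homogeneousComponent j p) =
      eval l (homogeneousComponent m p) := by
    refine (Finset.sum_eq_single m (fun j _ hjm => ?_) fun hm => ?_).trans (by simp)
    · rcases hjm.lt_or_gt with hj | hj
      · simp [hlow j hj]
      · simp [zero_pow (Nat.sub_ne_zero_of_lt hj)]
    · rw [homogeneousComponent_eq_zero m p (by simpa [Nat.lt_succ_iff] using hm)]
      simp
  simp_rw [hsplit, ← hlim]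
  exact tendsto_finsetSum _ fun j _ =>
    (hr.pow _).mul (((continuous_eval _).tendsto l).comp hu)

theorem eval_homogeneousComponent_eq_zero_of_tendsto {σ α : Type*} [Fintype σ]
    {p : MvPolynomial σ ℝ} {m : ℕ} (hlow : ∀ j < m, homogeneousComponent j p = 0)
    {q C : ℝ} (hmq : (m : ℝ) < q) {F : Filter α} [F.NeBot] {Q : α → EuclideanSpace ℝ σ}
    {l : EuclideanSpace ℝ σ} (hQ0 : ∀ k, Q k ≠ 0) (hQ : Tendsto Q F (𝓝 0))
    (hdir : Tendsto (fun k => ‖Q k‖⁻¹ • Q k) F (𝓝 l))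
    (hbound : ∀ k, |eval (Q k).ofLp p| ≤ C * ‖Q k‖ ^ q) :
    eval l.ofLp (homogeneousComponent m p) = 0 := by
  have hr0 (k : α) : ‖Q k‖ ≠ 0 := norm_ne_zero_iff.mpr (hQ0 k)
  have hr : Tendsto (fun k => ‖Q k‖) F (𝓝 0) := by simpa using hQ.norm
  have hscale (k : α) : ‖Q k‖ • (‖Q k‖⁻¹ • Q k).ofLp = (Q k).ofLp := by
    rw [WithLp.ofLp_smul, smul_inv_smul₀ (hr0 k)]
  have hlim := tendsto_eval_smul_div_pow hlow hr0 hr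
    (((PiLp.continuous_ofLp 2 _).tendsto l).comp hdir)
  simp only [Function.comp_def, hscale] at hlim
  refine tendsto_nhds_unique hlim (squeeze_zero_norm (a := fun k => C * ‖Q k‖ ^ (q - m))
    (fun k => ?_) ?_)
  · rw [norm_div, norm_pow, norm_norm, Real.norm_eq_abs, div_le_iff₀ (by positivity [hr0 k]),
      mul_assoc, ← Real.rpow_natCast, ← Real.rpow_add (by positivity [hr0 k]), sub_add_cancel]
    exact hbound k
  · have hpos : 0 < q - m := sub_pos.mpr hmq
    simpa [Real.zero_rpow hpos.ne'] using
      ((Real.continuousAt_rpow_const 0 _ (Or.inr hpos.le)).tendsto.comp hr).const_mul C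

end MvPolynomial

section BinaryForm

variable {K : Type*} [Field K]

theorem exists_forall_add_mul_ne_zero [Infinite K] {ι : Type*} [Fintype ι] (v : ι → Fin 2 → K)
    (hv : ∀ i, v i ≠ 0) : ∃ c : K, ∀ i, v i 1 + c * v i 0 ≠ 0 := by
  classical
  obtain ⟨c, hc⟩ := Infinite.exists_notMem_finset (Finset.univ.image fun i => -v i 1 / v i 0)
  refine ⟨c, fun i hi => ?_⟩
  by_cases h0 : v i 0 = 0
  · exact hv i (by ext j; fin_cases j <;> simp_all)
  · exact hc (Finset.mem_image.mpr ⟨i, Finset.mem_univ _, by field_simp; linear_combination -hi⟩)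

theorem inv_smul_eq_vecCons {c : K} {x : Fin 2 → K} (hx : x 1 + c * x 0 ≠ 0) :
    (x 1 + c * x 0)⁻¹ • x = ![x 0 / (x 1 + c * x 0), 1 - c * (x 0 / (x 1 + c * x 0))] := by
  ext i; fin_cases i <;> simp [field]

namespace MvPolynomial

theorem polynomial_eval_aeval_vecCons (c t : K) (P : MvPolynomial (Fin 2) K) :
    (aeval ![Polynomial.X, 1 - Polynomial.C c * Polynomial.X] P).eval t =
      eval ![t, 1 - c * t] P := by
  rw [← Polynomial.coe_aeval_eq_eval, ← AlgHom.comp_apply, comp_aeval, ← aeval_eq_eval]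
  congr 2
  ext i; fin_cases i <;> simp

theorem IsHomogeneous.eq_zero_of_card_lt [Infinite K] {P : MvPolynomial (Fin 2) K} {m : ℕ}
    (hP : P.IsHomogeneous m) {ι : Type*} [Fintype ι] (v : ι → Fin 2 → K) (hv0 : ∀ i, v i ≠ 0)
    (hv : Pairwise fun i j => ∀ c : K, v i ≠ c • v j) (hm : m < Fintype.card ι)
    (hvan : ∀ i, eval (v i) P = 0) : P = 0 := by
  obtain ⟨c, hc⟩ := exists_forall_add_mul_ne_zero v hv0
  set s : (Fin 2 → K) → K := fun x => x 1 + c * x 0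
  -- `t ↦ ![t, 1 - c * t]` is the affine chart of the projective line where `s ≠ 0`.
  set f : Polynomial K := MvPolynomial.aeval ![Polynomial.X, 1 - Polynomial.C c * Polynomial.X] P
  have hf (x : Fin 2 → K) (hx : s x ≠ 0) : eval x P = s x ^ m * f.eval (x 0 / s x) := by
    rw [polynomial_eval_aeval_vecCons, ← inv_smul_eq_vecCons hx, hP.eval_smul, ← mul_assoc,
      ← mul_pow, mul_inv_cancel₀ hx, one_pow, one_mul]
  have hfdeg : f.natDegree ≤ m := by
    have hline (i : Fin 2) :
        (![Polynomial.X, 1 - Polynomial.C c * Polynomial.X] i).natDegree ≤ 1 := by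
      fin_cases i
      · simp
      · simp only [Fin.mk_one, Matrix.cons_val_one, Matrix.cons_val_fin_one]
        compute_degree
    simpa using aeval_natDegree_le P hP.totalDegree_le _ hline
  have hinj : Function.Injective fun i => v i 0 / s (v i) := by
    intro i j hij
    by_contra hne
    have hchart : (s (v i))⁻¹ • v i = (s (v j))⁻¹ • v j := by
      rw [inv_smul_eq_vecCons (hc i), inv_smul_eq_vecCons (hc j)]
      exact congrArg (fun t => ![t, 1 - c * t]) hij
    rw [inv_smul_eq_iff₀ (hc i), smul_smul] at hchart
    exact hv hne _ hchart
  have hf0 : f = 0 := Polynomial.eq_zero_of_natDegree_lt_card_of_eval_eq_zero f hinj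
    (fun i => (mul_eq_zero.mp ((hf (v i) (hc i)).symm.trans (hvan i))).resolve_left
      (pow_ne_zero _ (hc i)))
    (hfdeg.trans_lt hm)
  have hform : (X 1 + C c * X 0 : MvPolynomial (Fin 2) K) ≠ 0 := fun h => by
    simpa using congrArg (eval ![0, 1]) h
  refine (mul_eq_zero.mp (MvPolynomial.funext fun x => ?_)).resolve_right hform
  by_cases hx : s x = 0
  · simpa using Or.inr hx
  · simp [hf x hx, hf0]

end MvPolynomial

end BinaryForm

theorem ne_smul_of_norm_eq_one {E : Type*} [NormedAddCommGroup E] [NormedSpace ℝ E] {x y : E}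
    (hx : ‖x‖ = 1) (hy : ‖y‖ = 1) (hxy : x ≠ y) (hxy' : x ≠ -y) (c : ℝ) : x ≠ c • y := by
  rintro rfl
  rw [norm_smul, hy, mul_one, Real.norm_eq_abs] at hx
  rcases (abs_eq zero_le_one).mp hx with rfl | rfl <;> simp_all

theorem statement19_general (d : ℕ) (p : MvPolynomial (Fin 2) ℝ)
    (hdeg : p.totalDegree ≤ d)
    (C : ℝ) (q : ℝ) (hq : (d : ℝ) < q)
    (z : ℕ → EuclideanSpace ℝ (Fin 2))
    (hbound : ∀ k, |MvPolynomial.eval (fun i => z k i) p| ≤ C * ‖z k‖ ^ q)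
    (happr : HasDistinctApproachDirections (Set.range z) 0 (d + 1)) :
    p = 0 := by
  obtain ⟨l, hl, hdist⟩ := happr
  refine MvPolynomial.eq_zero_of_forall_homogeneousComponent_eq_zero fun m hlow => ?_
  rcases lt_or_ge d m with hdm | hmd
  · exact MvPolynomial.homogeneousComponent_eq_zero m p (hdeg.trans_lt hdm)
  refine (MvPolynomial.homogeneousComponent_isHomogeneous m p).eq_zero_of_card_lt
    (fun i => (l i).ofLp) (fun i => ?_) (fun i j hij c => ?_)
    (by simpa [Nat.lt_succ_iff] using hmd) fun i => ?_
  · simpa using ne_zero_of_norm_ne_zero (a := l i) (by simp [(hl i).1])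
  · rw [← WithLp.ofLp_smul, (WithLp.ofLp_injective 2).ne_iff]
    exact ne_smul_of_norm_eq_one (hl i).1 (hl j).1 (hdist i j hij).1 (hdist i j hij).2 c
  · obtain ⟨-, Q, hQz, hQ0, hQ, hdir⟩ := hl i
    simp only [sub_zero] at hdir
    refine MvPolynomial.eval_homogeneousComponent_eq_zero_of_tendsto (C := C) hlow
      ((Nat.cast_le.mpr hmd).trans_lt hq) hQ0 hQ hdir fun k => ?_
    obtain ⟨j, hj⟩ := hQz k
    exact hj ▸ hbound j

/-- **Proposition PP2.** Let `p(x, y)` be a real polynomial of total degree at most `d`.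
If `|p(x_k, y_k)| ≤ C ‖(x_k, y_k)‖^q` along a sequence of nonzero points of the plane
converging to the origin, with `q > d`, and the set of these points has `d + 1` distinct
approach directions at the origin, then `p` is identically zero. -/
theorem statement19 (d : ℕ) (p : MvPolynomial (Fin 2) ℝ)
    (hdeg : p.totalDegree ≤ d)
    (C : ℝ) (hC : 0 < C) (q : ℝ) (hq : (d : ℝ) < q)
    (z : ℕ → EuclideanSpace ℝ (Fin 2))
    (hz0 : ∀ k, z k ≠ 0) (hzlim : Tendsto z atTop (𝓝 0))
    (hbound : ∀ k, |MvPolynomial.eval (fun i => z k i) p| ≤ C * ‖z k‖ ^ q)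
    (happr : HasDistinctApproachDirections (Set.range z) 0 (d + 1)) :
    p = 0 :=
  statement19_general d p hdeg C q hq z hbound happr
end
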